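/- arXiv:2304.01608 — 3 statements merged into one kernel-verified Lean document; each statement's English description precedes it below -/
import Mathlib

section
/- Let G = (V,E) be a finite weighted graph (a probability distribution on edges, inducing a distribution on vertices) that is a λ-edge expander, and let S_1, …, S_m ⊆ V be mutually disjoint sets with V = S_1 ∪ … ∪ S_m such that the probability that a random edge crosses between two different sets S_i, S_j is strictly less than ε, where ε ≤ λ/2. Then there exists an index j such that Pr(S_j) ≥ 1 − ε/λ. -/
open scoped Classical BigOperators

universe u v w

noncomputable section

variable {V : Type w} [Fintype V] [DecidableEq V]

/-- A finite weighted simplicial complex on the vertex set `V`: a collection of faces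
together with a weight function (intended to be supported on top-dimensional faces). -/
structure WSC (V : Type w) [Fintype V] [DecidableEq V] where
  faces : Finset (Finset V)
  weight : Finset V → ℝ

namespace WSC

/-- `X` is a pure `d`-dimensional weighted simplicial complex: it is nonempty and downward
closed, every face is contained in a face with `d+1` vertices, and the weight function is a
(positive, unnormalized) density supported exactly on the `d`-dimensional faces. -/
def IsPureDim (X : WSC V) (d : ℕ) : Prop :=
  ∅ ∈ X.faces ∧
  (∀ s ∈ X.faces, ∀ t, t ⊆ s → t ∈ X.faces) ∧
  (∀ s ∈ X.faces, ∃ m ∈ X.faces, s ⊆ m ∧ m.card = d + 1) ∧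
  (∀ s, 0 ≤ X.weight s) ∧
  (∀ s, X.weight s ≠ 0 → s ∈ X.faces ∧ s.card = d + 1) ∧
  (∀ s ∈ X.faces, s.card = d + 1 → 0 < X.weight s)

/-- The induced (unnormalized) weight of a set of vertices: the total weight of the
top-dimensional faces containing it.  For a `k`-face this is proportional to the induced
density `Pr_k`. -/
def inducedWeight (X : WSC V) (t : Finset V) : ℝ :=
  ∑ s : Finset V, if t ⊆ s then X.weight s else 0

/-- An ordered tuple of vertices spanning a face of `X`. -/
def IsFaceTuple (X : WSC V) {n : ℕ} (σ : Fin n → V) : Prop :=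
  Function.Injective σ ∧ Finset.image σ Finset.univ ∈ X.faces

/-- The weight of an ordered face (each ordering of a face is equally likely). -/
def tupleWeight (X : WSC V) {n : ℕ} (σ : Fin n → V) : ℝ :=
  if X.IsFaceTuple σ then X.inducedWeight (Finset.image σ Finset.univ) else 0

/-- The probability that a uniformly weighted random ordered `(n-1)`-dimensional face
of `X` satisfies `A`. -/
def faceProb (X : WSC V) (n : ℕ) (A : (Fin n → V) → Prop) : ℝ :=
  (∑ σ : Fin n → V, if A σ then X.tupleWeight σ else 0) /
    (∑ σ : Fin n → V, X.tupleWeight σ)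

/-- Conditional probability of `A` given `B` for a random ordered `(n-1)`-face. -/
def condProb (X : WSC V) (n : ℕ) (A B : (Fin n → V) → Prop) : ℝ :=
  (∑ σ : Fin n → V, if A σ ∧ B σ then X.tupleWeight σ else 0) /
    (∑ σ : Fin n → V, if B σ then X.tupleWeight σ else 0)

/-- The link of a face, with its induced weight function. -/
def link (X : WSC V) (r : Finset V) : WSC V where
  faces := Finset.univ.filter fun t => Disjoint t r ∧ t ∪ r ∈ X.faces
  weight := fun t => if Disjoint t r then X.weight (t ∪ r) else 0

/-- The `m`-skeleton of `X` (as an unweighted complex). -/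
def skeleton (X : WSC V) (m : ℕ) : WSC V where
  faces := X.faces.filter fun s => s.card ≤ m + 1
  weight := fun _ => 0

end WSC

section Cochains

variable {Γ : Type u} [AddCommGroup Γ]

/-- An asymmetric function on ordered faces (a cochain):
reordering by a permutation multiplies the value by the sign of the permutation. -/
def IsAsym {n : ℕ} (f : (Fin n → V) → Γ) : Prop :=
  ∀ (σ : Fin n → V) (π : Equiv.Perm (Fin n)),
    f (σ ∘ π) = ((Equiv.Perm.sign π : ℤˣ) : ℤ) • f σ

/-- The coboundary map `δ`, sending functions on ordered `(n-1)`-dimensional faces to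
functions on ordered `n`-dimensional faces. -/
def cobound {n : ℕ} (f : (Fin n → V) → Γ) : (Fin (n + 1) → V) → Γ :=
  fun σ => ∑ i : Fin (n + 1), ((-1 : ℤ) ^ (i : ℕ)) • f (σ ∘ Fin.succAbove i)

/-- The (normalized) weight of the support of a cochain. -/
def WSC.cwt (X : WSC V) {n : ℕ} (f : (Fin n → V) → Γ) : ℝ :=
  X.faceProb n (fun σ => f σ ≠ 0)

/-- The normalized Hamming distance between two cochains. -/
def WSC.cdist (X : WSC V) {n : ℕ} (f g : (Fin n → V) → Γ) : ℝ :=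
  X.faceProb n (fun σ => f σ ≠ g σ)

/-- `f` is a `k`-cocycle of `X` (an element of `Z^k(X,Γ)`). -/
def WSC.IsCocycle (X : WSC V) (k : ℕ) (f : (Fin (k + 1) → V) → Γ) : Prop :=
  IsAsym f ∧ ∀ σ : Fin (k + 2) → V, X.IsFaceTuple σ → cobound f σ = 0

/-- `f` is a `k`-coboundary of `X` (an element of `B^k(X,Γ)`). -/
def WSC.IsCobound (X : WSC V) (k : ℕ) (f : (Fin (k + 1) → V) → Γ) : Prop :=
  ∃ g : (Fin k → V) → Γ, IsAsym g ∧
    ∀ σ : Fin (k + 1) → V, X.IsFaceTuple σ → f σ = cobound g σ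

end Cochains

/-- `X` is a coboundary expander on `k`-cochains with coboundary expansion constant
`h^k(X,Γ) ≥ β`: every cocycle is a coboundary, and `β · dist(f, B^k) ≤ wt(δ f)` for
every asymmetric `f`. -/
def WSC.CobExpander (X : WSC V) (k : ℕ) (Γ : Type u) [AddCommGroup Γ] (β : ℝ) : Prop :=
  (∀ f : (Fin (k + 1) → V) → Γ, X.IsCocycle k f → X.IsCobound k f) ∧
  ∀ f : (Fin (k + 1) → V) → Γ, IsAsym f →
    ∃ g : (Fin k → V) → Γ, IsAsym g ∧
      β * X.cdist f (cobound g) ≤ X.cwt (cobound f)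

/-- The cosystolic expansion constant of `X` on `k`-cochains is at least `β`:
`β · dist(f, Z^k) ≤ wt(δ f)` for every asymmetric `f`. -/
def WSC.CosysExpander (X : WSC V) (k : ℕ) (Γ : Type u) [AddCommGroup Γ] (β : ℝ) : Prop :=
  ∀ f : (Fin (k + 1) → V) → Γ, IsAsym f →
    ∃ z : (Fin (k + 1) → V) → Γ, X.IsCocycle k z ∧
      β * X.cdist f z ≤ X.cwt (cobound f)

section Spectral

/-- weight of a vertex in the 1-skeleton of `X`. -/
def WSC.vertexWeight (X : WSC V) (x : V) : ℝ := X.inducedWeight {x}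

/-- weight of an (ordered) edge of the 1-skeleton of `X`. -/
def WSC.edgeWeight (X : WSC V) (x y : V) : ℝ :=
  if x ≠ y then X.inducedWeight {x, y} else 0

/-- The second largest eigenvalue of the weighted normalized adjacency operator of the
1-skeleton of `X` is at most `lam` (variational formulation: on functions orthogonal to
the constants, the normalized quadratic form is bounded by `lam` times the norm). -/
def WSC.SpectralGapLE (X : WSC V) (lam : ℝ) : Prop :=
  ∀ f : V → ℝ, (∑ x, X.vertexWeight x * f x) = 0 →
    (∑ x, ∑ y, X.edgeWeight x y * f x * f y) / (∑ x, ∑ y, X.edgeWeight x y) ≤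
      lam * ((∑ x, X.vertexWeight x * f x ^ 2) / (∑ x, X.vertexWeight x))

/-- `X` is a `lam`-one-sided local spectral expander: the 1-skeleton of every link
(including the link of the empty face, i.e. `X` itself) has second eigenvalue ≤ `lam`. -/
def WSC.LocalSpectralExpander (X : WSC V) (lam : ℝ) : Prop :=
  X.SpectralGapLE lam ∧ ∀ r ∈ X.faces, (X.link r).SpectralGapLE lam

end Spectral

section Restriction

/-- The restriction of a `(k-1)`-dimensional cochain to (the link of) an ordered face `ρ`:
`g_ρ(σ) = g(ρ ∘ σ)` (concatenation of tuples). -/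
def cochainRestrict {Γ : Type u} [AddCommGroup Γ] {k a b : ℕ} (h : a + b = k)
    (g : (Fin k → V) → Γ) (ρ : Fin a → V) : (Fin b → V) → Γ :=
  fun σ => g fun i => Fin.append ρ σ (Fin.cast h.symm i)

/-- `g ∈ C^k(X,Γ)` is `η`-locally minimal: for every face `r` of dimension `0 ≤ ℓ ≤ k-1`
and every cochain `h ∈ C^{k-ℓ-2}(X_r,Γ)`, `wt(g_r) ≤ wt(g_r + δ h) + η`. -/
def WSC.EtaLocMin (X : WSC V) {Γ : Type u} [AddCommGroup Γ] (k : ℕ) (η : ℝ)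
    (g : (Fin (k + 1) → V) → Γ) : Prop :=
  ∀ (a b : ℕ) (hab : (a + 1) + (b + 1) = k + 1) (ρ : Fin (a + 1) → V),
    X.IsFaceTuple ρ → ∀ h : (Fin b → V) → Γ, IsAsym h →
      (X.link (Finset.image ρ Finset.univ)).cwt (cochainRestrict hab g ρ) ≤
        (X.link (Finset.image ρ Finset.univ)).cwt
          (cochainRestrict hab g ρ + cobound h) + η

/-- The indicator (as a real-valued function on unordered faces) of the support of a
cochain `g`. -/
def suppIndicator {Γ : Type u} [AddCommGroup Γ] {n : ℕ} (g : (Fin n → V) → Γ) :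
    Finset V → ℝ := fun t =>
  if ∃ σ : Fin n → V, Function.Injective σ ∧ Finset.image σ Finset.univ = t ∧ g σ ≠ 0
  then 1 else 0

end Restriction

section Operators

/-- The down averaging operator `D`: `D f(s)` is the average of `f(t)` over faces `t ⊇ s`
with one more vertex, weighted by the induced density. -/
def WSC.downAvg (X : WSC V) (f : Finset V → ℝ) : Finset V → ℝ := fun s =>
  (∑ t : Finset V, if s ⊆ t ∧ t.card = s.card + 1 then X.inducedWeight t * f t else 0) /
    (∑ t : Finset V, if s ⊆ t ∧ t.card = s.card + 1 then X.inducedWeight t else 0)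

/-- The up averaging operator `U`: `U f(t)` is the average of `f(s)` over codimension-one
subfaces `s ⊆ t` (each equally likely). -/
def WSC.upAvg (X : WSC V) (f : Finset V → ℝ) : Finset V → ℝ := fun t =>
  (∑ s : Finset V, if s ⊆ t ∧ s.card + 1 = t.card then f s else 0) / (t.card : ℝ)

/-- The operator `N_{k→j}`: `N f(r) = E_{t ∈ X(k+1), t ⊇ r} [E_{s ⊂ t, |s| = k+1, r ⊄ s} f(s)]`.
(The faces `s ⊂ t` of cardinality `k+1` with `r ⊄ s` are exactly `t.erase v` for `v ∈ r`.) -/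
def WSC.NAvg (X : WSC V) (k : ℕ) (f : Finset V → ℝ) : Finset V → ℝ := fun r =>
  (∑ t : Finset V, if r ⊆ t ∧ t.card = k + 2 then
      X.inducedWeight t * ((∑ x ∈ r, f (t.erase x)) / (r.card : ℝ)) else 0) /
    (∑ t : Finset V, if r ⊆ t ∧ t.card = k + 2 then X.inducedWeight t else 0)

/-- The weighted inner product on real valued functions on `m`-dimensional faces. -/
def WSC.innerAt (X : WSC V) (m : ℕ) (f g : Finset V → ℝ) : ℝ :=
  (∑ r : Finset V, if r.card = m + 1 then X.inducedWeight r * f r * g r else 0) /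
    (∑ r : Finset V, if r.card = m + 1 then X.inducedWeight r else 0)

end Operators

section Partite

/-- `X` is `d`-partite with coloring `col`: colors take `d` values and every face has
pairwise distinct colors (so every top face meets every color class exactly once). -/
def WSC.IsPartite (X : WSC V) (d : ℕ) (col : V → ℕ) : Prop :=
  (∀ x, col x < d) ∧ ∀ s ∈ X.faces, Set.InjOn col ↑s

/-- The color restriction `X^F`: faces whose colors lie in `F`, with top-dimensional
weight induced from `X`. -/
def WSC.colorRestrict (X : WSC V) (col : V → ℕ) (F : Finset ℕ) : WSC V where
  faces := X.faces.filter fun s => Finset.image col s ⊆ F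
  weight := fun t =>
    if t ∈ X.faces ∧ Finset.image col t = F then X.inducedWeight t else 0

/-- `X^F` is `(k,β)`-locally coboundary expanding (with respect to `Γ`): `X^F` is a
coboundary expander with `h^k(X^F,Γ) ≥ β`, and for every `0 ≤ j ≤ k-1` and every face `s`
of dimension `j` with colors disjoint from `F`, `X_s^F` is a coboundary expander with
`h^{k-j-1}(X_s^F,Γ) ≥ β`. -/
def WSC.LocCobExpanding (X : WSC V) (col : V → ℕ) (F : Finset ℕ) (k : ℕ)
    (Γ : Type u) [AddCommGroup Γ] (β : ℝ) : Prop :=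
  (X.colorRestrict col F).CobExpander k Γ β ∧
  ∀ j m : ℕ, j + m + 1 = k → ∀ s ∈ X.faces, s.card = j + 1 →
    Disjoint (Finset.image col s) F →
      ((X.link s).colorRestrict col F).CobExpander m Γ β

end Partite

section NonAbelian

/-! Cochains with coefficients in a possibly non-abelian group `Γ`, in dimensions 0 and 1. -/

variable {Γ : Type u} [Group Γ]

/-- asymmetry for a `Γ`-valued function on ordered edges: `g(uv) = g(vu)⁻¹`. -/
def mAsym (f : (Fin 2 → V) → Γ) : Prop := ∀ x y : V, f ![x, y] * f ![y, x] = 1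

/-- The non-abelian coboundary `δ₀ h (vu) = h(v) h(u)⁻¹`. -/
def mCobound₀ (h : (Fin 1 → V) → Γ) : (Fin 2 → V) → Γ :=
  fun σ => h ![σ 0] * (h ![σ 1])⁻¹

/-- The non-abelian coboundary `δ₁ g (vuw) = g(vu) g(uw) g(wv)`. -/
def mCobound₁ (g : (Fin 2 → V) → Γ) : (Fin 3 → V) → Γ :=
  fun σ => g ![σ 0, σ 1] * g ![σ 1, σ 2] * g ![σ 2, σ 0]

end NonAbelian

/-- Non-abelian coboundary expansion on `0`-cochains with constant `≥ β`:
`Z^0 = B^0` (cocycles are constants) and `β · dist(f, B^0) ≤ wt(δ₀ f)`. -/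
def WSC.MCobExpander₀ (X : WSC V) (Γ : Type u) [Group Γ] (β : ℝ) : Prop :=
  (∀ f : (Fin 1 → V) → Γ, (∀ σ : Fin 2 → V, X.IsFaceTuple σ → mCobound₀ f σ = 1) →
    ∃ γ : Γ, ∀ σ : Fin 1 → V, X.IsFaceTuple σ → f σ = γ) ∧
  ∀ f : (Fin 1 → V) → Γ, ∃ γ : Γ,
    β * X.faceProb 1 (fun σ => f σ ≠ γ) ≤ X.faceProb 2 (fun σ => mCobound₀ f σ ≠ 1)

/-- Non-abelian coboundary expansion on `1`-cochains with constant `≥ β`: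
`Z^1 = B^1` and `β · dist(f, B^1) ≤ wt(δ₁ f)` for every asymmetric `f`. -/
def WSC.MCobExpander₁ (X : WSC V) (Γ : Type u) [Group Γ] (β : ℝ) : Prop :=
  (∀ f : (Fin 2 → V) → Γ, mAsym f →
      (∀ σ : Fin 3 → V, X.IsFaceTuple σ → mCobound₁ f σ = 1) →
      ∃ h : (Fin 1 → V) → Γ, ∀ σ : Fin 2 → V, X.IsFaceTuple σ → f σ = mCobound₀ h σ) ∧
  ∀ f : (Fin 2 → V) → Γ, mAsym f → ∃ h : (Fin 1 → V) → Γ,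
    β * X.faceProb 2 (fun σ => f σ ≠ mCobound₀ h σ) ≤
      X.faceProb 3 (fun σ => mCobound₁ f σ ≠ 1)

/-- Non-abelian cosystolic expansion on `1`-cochains with constant `≥ β`:
`β · dist(f, Z^1) ≤ wt(δ₁ f)` for every asymmetric `f`. -/
def WSC.MCosysExpander₁ (X : WSC V) (Γ : Type u) [Group Γ] (β : ℝ) : Prop :=
  ∀ f : (Fin 2 → V) → Γ, mAsym f →
    ∃ z : (Fin 2 → V) → Γ, mAsym z ∧
      (∀ σ : Fin 3 → V, X.IsFaceTuple σ → mCobound₁ z σ = 1) ∧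
      β * X.faceProb 2 (fun σ => f σ ≠ z σ) ≤
        X.faceProb 3 (fun σ => mCobound₁ f σ ≠ 1)

/-- Non-abelian version of local coboundary expansion of a color restriction, for
`1`-cochains. -/
def WSC.MLocCobExpanding₁ (X : WSC V) (col : V → ℕ) (F : Finset ℕ)
    (Γ : Type u) [Group Γ] (β : ℝ) : Prop :=
  (X.colorRestrict col F).MCobExpander₁ Γ β ∧
  ∀ s ∈ X.faces, s.card = 1 → Disjoint (Finset.image col s) F →
    ((X.link s).colorRestrict col F).MCobExpander₀ Γ β

end

noncomputable section

section GeomLattice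

variable (P : Type v) [Fintype P] [DecidableEq P] [Lattice P] [BoundedOrder P]

/-- `rk` witnesses that the finite bounded lattice `P` is a geometric lattice:
`rk ⊥ = 0`, covers increase the rank by one, the rank function is submodular, and
every element is a join of atoms. -/
def IsGeomLattice (rk : P → ℕ) : Prop :=
  rk (⊥ : P) = 0 ∧
  (∀ x y : P, x ⋖ y → rk y = rk x + 1) ∧
  (∀ x y : P, rk (x ⊔ y) + rk (x ⊓ y) ≤ rk x + rk y) ∧
  ∀ x : P, x = (Finset.univ.filter fun a : P => IsAtom a ∧ a ≤ x).sup id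

/-- The proper part `P ∖ {⊥, ⊤}` of the lattice. -/
abbrev Pbar := {x : P // x ≠ ⊥ ∧ x ≠ ⊤}

/-- The order complex of `P̄ = P ∖ {⊥,⊤}`: faces are the chains of `P̄`, with the
uniform weight on maximal chains (which have `rk ⊤ - 1` elements). -/
def orderComplex (rk : P → ℕ) : WSC (Pbar P) where
  faces := Finset.univ.filter fun s : Finset (Pbar P) =>
    ∀ x ∈ s, ∀ y ∈ s, x.1 ≤ y.1 ∨ y.1 ≤ x.1
  weight := fun s =>
    if (∀ x ∈ s, ∀ y ∈ s, x.1 ≤ y.1 ∨ y.1 ≤ x.1) ∧ s.card = rk (⊤ : P) - 1 then 1 else 0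

/-- `P` is homogeneous: its automorphism group acts transitively on the maximal faces
of the order complex. -/
def IsHomogeneous (rk : P → ℕ) : Prop :=
  ∀ s t : Finset (Pbar P), s ∈ (orderComplex P rk).faces → t ∈ (orderComplex P rk).faces →
    s.card = rk (⊤ : P) - 1 → t.card = rk (⊤ : P) - 1 →
    ∃ φ : P ≃o P, Finset.image (fun x : Pbar P => φ x.1) s
      = Finset.image (fun x : Pbar P => x.1) t

/-- The number of maximal chains of `P̄` containing a given set of elements. -/
def maxChainsThrough (rk : P → ℕ) (s : Finset (Pbar P)) : ℕ :=
  (((orderComplex P rk).faces).filter fun C => C.card = rk (⊤ : P) - 1 ∧ s ⊆ C).card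

/-- The weighted bipartite graph between the rank-`i` and rank-`j` elements of `P̄`,
with an edge `x < y` for `rk x = i`, `rk y = j`, weighted by the number of maximal
chains through `{x,y}` (packaged as a 1-dimensional weighted complex). -/
def bipGraph (rk : P → ℕ) (i j : ℕ) : WSC (Pbar P) where
  faces := Finset.univ.filter fun s : Finset (Pbar P) =>
    ∃ x y : Pbar P, rk x.1 = i ∧ rk y.1 = j ∧ x.1 < y.1 ∧ s ⊆ {x, y}
  weight := fun s =>
    if ∃ x y : Pbar P, rk x.1 = i ∧ rk y.1 = j ∧ x.1 < y.1 ∧ s = {x, y}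
    then (maxChainsThrough P rk s : ℝ) else 0

end GeomLattice

section Building

/-- The vertices of the `SL_n(𝔽)`-spherical building: nonzero proper subspaces of `𝔽ⁿ`. -/
abbrev BVert (𝔽 : Type) [Field 𝔽] (n : ℕ) :=
  {W : Submodule 𝔽 (Fin n → 𝔽) // W ≠ ⊥ ∧ W ≠ ⊤}

noncomputable instance (𝔽 : Type) [Field 𝔽] [Fintype 𝔽] (n : ℕ) :
    Fintype (Submodule 𝔽 (Fin n → 𝔽)) := by
  classical
  haveI : Finite (Submodule 𝔽 (Fin n → 𝔽)) :=
    Finite.of_injective (fun W => (W : Set (Fin n → 𝔽))) SetLike.coe_injective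
  exact Fintype.ofFinite _

noncomputable instance (𝔽 : Type) [Field 𝔽] [Fintype 𝔽] (n : ℕ) : Fintype (BVert 𝔽 n) := by
  classical
  exact Fintype.ofFinite _

/-- The `SL_n(𝔽)`-spherical building: faces are flags of nonzero proper subspaces of `𝔽ⁿ`,
with the uniform weight on complete flags (which have `n - 1` subspaces). -/
noncomputable def building (𝔽 : Type) [Field 𝔽] [Fintype 𝔽] (n : ℕ) : WSC (BVert 𝔽 n) where
  faces := Finset.univ.filter fun s : Finset (BVert 𝔽 n) =>
    ∀ x ∈ s, ∀ y ∈ s, x.1 ≤ y.1 ∨ y.1 ≤ x.1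
  weight := fun s =>
    if (∀ x ∈ s, ∀ y ∈ s, x.1 ≤ y.1 ∨ y.1 ≤ x.1) ∧ s.card = n - 1 then 1 else 0

end Building

section Chains

variable {V : Type w} [Fintype V] [DecidableEq V]

/-- The integral chain corresponding to a single oriented face. -/
def basisChain {n : ℕ} (s : Fin n → V) : (Fin n → V) → ℤ := fun σ =>
  ∑ π : Equiv.Perm (Fin n), if σ = s ∘ π then ((Equiv.Perm.sign π : ℤˣ) : ℤ) else 0

/-- The boundary operator on integral chains (represented as asymmetric functions on
ordered faces): `∂c(τ) = ∑_{v} c(v ::: τ)`. -/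
def bdry {n : ℕ} (c : (Fin (n + 1) → V) → ℤ) : (Fin n → V) → ℤ := fun τ =>
  ∑ x : V, c (Fin.cons x τ)

/-- Asymmetry for integral chains. -/
def IsAsymZ {n : ℕ} (c : (Fin n → V) → ℤ) : Prop :=
  ∀ (σ : Fin n → V) (π : Equiv.Perm (Fin n)),
    c (σ ∘ π) = ((Equiv.Perm.sign π : ℤˣ) : ℤ) * c σ

/-- The support of a chain: the set of (unordered) faces with a nonzero coefficient. -/
def chainSupp {n : ℕ} (c : (Fin n → V) → ℤ) : Finset (Finset V) :=
  Finset.univ.filter fun t => ∃ σ : Fin n → V, Finset.image σ Finset.univ = t ∧ c σ ≠ 0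

/-- The vertex support of a chain. -/
def chainVS {n : ℕ} (c : (Fin n → V) → ℤ) : Finset V :=
  Finset.univ.filter fun x => ∃ σ : Fin n → V, c σ ≠ 0 ∧ x ∈ Set.range σ

/-- An `ℓ`-cone on the complex `Y`: a sequence of `ℤ`-linear maps
`ψ_i : C_i(Y,ℤ) → C_{i+1}(Y,ℤ)` (indexed here by the number `n = i + 1` of vertices)
such that `∂ ψ_j(s) = s - ∑_i (-1)^i ψ_{j-1}(s_i)` for every `j ≤ ℓ` and `s ∈ Y(j)`. -/
structure ConeOn (Y : WSC V) (ℓ : ℕ) where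
  psi : (n : ℕ) → ((Fin n → V) → ℤ) → (Fin (n + 1) → V) → ℤ
  additive : ∀ (n : ℕ) (c c' : (Fin n → V) → ℤ), psi n (c + c') = psi n c + psi n c'
  inComplex : ∀ (n : ℕ) (c : (Fin n → V) → ℤ) (σ : Fin (n + 1) → V),
    psi n c σ ≠ 0 → Y.IsFaceTuple σ
  asymOut : ∀ (n : ℕ) (c : (Fin n → V) → ℤ), IsAsymZ (psi n c)
  coneEq : ∀ n ≤ ℓ, ∀ s : Fin (n + 1) → V, Y.IsFaceTuple s →
    bdry (psi (n + 1) (basisChain s)) =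
      basisChain s -
        ∑ i : Fin (n + 1), ((-1 : ℤ) ^ (i : ℕ)) • psi n (basisChain (s ∘ Fin.succAbove i))

/-- The cone has radius at most `B`: every `ψ(s)` is supported on at most `B` faces. -/
def ConeOn.radiusLE {Y : WSC V} {ℓ : ℕ} (C : ConeOn Y ℓ) (B : ℕ) : Prop :=
  ∀ n ≤ ℓ + 1, ∀ s : Fin n → V, Y.IsFaceTuple s →
    (chainSupp (C.psi n (basisChain s))).card ≤ B

end Chains

section Sequences

/-- `c_0 = 2`, `c_i = c_{i-1} + (i+2)`. -/
def cSeq : ℕ → ℕ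
  | 0 => 2
  | i + 1 => cSeq i + (i + 3)

/-- `n_0 = 4`, `n_i = 2(i+2) - (i+1)² + (i+1) n_{i-1}` (computed in `ℤ`). -/
def nSeqZ : ℕ → ℤ
  | 0 => 4
  | i + 1 => 2 * ((i : ℤ) + 3) - ((i : ℤ) + 2) ^ 2 + ((i : ℤ) + 2) * nSeqZ i

/-- `D_0 = 3`, `D_i = (i+2)(i+1)(D_{i-1} + 1)`. -/
def DSeq : ℕ → ℕ
  | 0 => 3
  | i + 1 => (i + 3) * (i + 2) * (DSeq i + 1)

/-- The set of colors `{ι 0 < ι 1 < ⋯ }` is `k`-suitable: `i₂ ≥ 2 i₁`, and for all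
`0 ≤ j ≤ k-1` and `1 ≤ m ≤ j+2`, `i_{c_j+m} ≥ n_j · i_{c_j} + ∑_{m'=1}^{m-1} i_{c_j+m'}`
(with 1-based indexing `i_t = ι (t-1)`). -/
def SuitableColors (k : ℕ) (ι : ℕ → ℕ) : Prop :=
  2 * ι 0 ≤ ι 1 ∧
  ∀ j m : ℕ, j < k → 1 ≤ m → m ≤ j + 2 →
    nSeqZ j * (ι (cSeq j - 1) : ℤ) +
        ∑ m' ∈ Finset.Ico 1 m, (ι (cSeq j + m' - 1) : ℤ)
      ≤ (ι (cSeq j + m - 1) : ℤ)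

end Sequences

section GoodCone

variable {W : Type w} [Fintype W] [DecidableEq W]

/-- The color restriction of `Y` to the `ℓ` colors `{ι 0, …, ι (ℓ-1)}` admits a `k`-cone
`ψ` of radius at most `D_k` such that moreover `|vs(ψ_j(s))| ≤ n_j` and every vertex of
`vs(ψ_j(s))` outside `s` has color at most `i_{c_j} = ι (c_j - 1)`. -/
def HasGoodCone (Y : WSC W) (colw : W → ℕ) (k ℓ : ℕ) (ι : ℕ → ℕ) : Prop :=
  ∃ C : ConeOn (Y.colorRestrict colw ((Finset.range ℓ).image ι)) k,
    C.radiusLE (DSeq k) ∧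
    ∀ j ≤ k, ∀ s : Fin (j + 1) → W,
      (Y.colorRestrict colw ((Finset.range ℓ).image ι)).IsFaceTuple s →
        ((chainVS (C.psi (j + 1) (basisChain s))).card : ℤ) ≤ nSeqZ j ∧
        ∀ x ∈ chainVS (C.psi (j + 1) (basisChain s)), x ∉ Set.range s →
          colw x ≤ ι (cSeq j - 1)

end GoodCone

end

/-- In a `λ`-edge-expander graph (given by a symmetric probability
distribution `wgt` on ordered edges, with induced vertex distribution
`Pr(x) = ∑ y, wgt y x`), if `V` is partitioned into mutually disjoint sets
`S 0, …, S (m-1)` with less than `ε ≤ λ/2` of the edge mass crossing between different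
sets, then some `S j` has measure at least `1 - ε/λ`. -/
theorem stmt_11 {V : Type w} [Fintype V] [DecidableEq V]
    (wgt : V → V → ℝ) (hsymm : ∀ x y, wgt x y = wgt y x) (hnn : ∀ x y, 0 ≤ wgt x y)
    (hdiag : ∀ x, wgt x x = 0) (htot : ∑ x, ∑ y, wgt x y = 1)
    (lam : ℝ)
    (hexp : ∀ S : Finset V,
      0 < ∑ x ∈ S, ∑ y, wgt y x → (∑ x ∈ S, ∑ y, wgt y x) ≤ 1 / 2 →
        lam * (∑ x ∈ S, ∑ y, wgt y x) ≤ 2 * ∑ x ∈ S, ∑ y ∈ Sᶜ, wgt x y)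
    (m : ℕ) (S : Fin m → Finset V)
    (hdisj : ∀ i j, i ≠ j → Disjoint (S i) (S j))
    (hcover : ∀ x : V, ∃ i, x ∈ S i)
    (ε : ℝ) (hεlam : ε ≤ lam / 2)
    (hcross : (∑ i, ∑ j, if i ≠ j then ∑ x ∈ S i, ∑ y ∈ S j, wgt x y else 0) < ε) :
    ∃ j, 1 - ε / lam ≤ ∑ x ∈ S j, ∑ y, wgt y x := by
  classical
  set f : V → ℝ := fun x => ∑ y, wgt y x with hf_def
  have hfnn : ∀ x, 0 ≤ f x := fun x => Finset.sum_nonneg fun y _ => hnn y x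
  -- summing over the partition equals summing over V
  have key : ∀ g : V → ℝ, ∑ i, ∑ x ∈ S i, g x = ∑ x, g x := by
    intro g
    have h1 : ∀ x : V, ∑ i, (if x ∈ S i then g x else 0) = g x := by
      intro x
      obtain ⟨i, hi⟩ := hcover x
      rw [Finset.sum_eq_single i]
      · simp [hi]
      · intro j _ hj
        have hx : x ∉ S j := fun hxj => Finset.disjoint_left.mp (hdisj j i hj) hxj hi
        simp [hx]
      · intro h; exact absurd (Finset.mem_univ i) h
    calc ∑ i, ∑ x ∈ S i, g x
        = ∑ i, ∑ x : V, (if x ∈ S i then g x else 0) := by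
          refine Finset.sum_congr rfl fun i _ => ?_
          rw [Finset.sum_ite_mem, Finset.univ_inter]
      _ = ∑ x : V, ∑ i, (if x ∈ S i then g x else 0) := Finset.sum_comm
      _ = ∑ x, g x := by simp only [h1]
  have htotf : ∑ x, f x = 1 := by
    rw [hf_def]; exact (Finset.sum_comm).trans htot
  have hpart : ∑ i, ∑ x ∈ S i, f x = 1 := (key f).trans htotf
  -- removing one index from a sum
  have h3 : ∀ (A : Fin m → ℝ) (i : Fin m),
      ∑ i', (if i' = i then 0 else A i') = (∑ i', A i') - A i := by
    intro A i
    have hpt : ∀ i' : Fin m, (if i' = i then 0 else A i')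
        = A i' - (if i' = i then A i' else 0) := by
      intro i'; by_cases h : i' = i <;> simp [h]
    rw [Finset.sum_congr rfl fun i' _ => hpt i', Finset.sum_sub_distrib,
      Finset.sum_ite_eq' Finset.univ i A]
    simp
  have hEnn : ∀ (A B : Finset V), 0 ≤ ∑ x ∈ A, ∑ y ∈ B, wgt x y := by
    intro A B
    exact Finset.sum_nonneg fun x _ => Finset.sum_nonneg fun y _ => hnn x y
  have hsym2 : ∀ (A B : Finset V),
      ∑ x ∈ A, ∑ y ∈ B, wgt x y = ∑ x ∈ B, ∑ y ∈ A, wgt x y := by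
    intro A B
    calc ∑ x ∈ A, ∑ y ∈ B, wgt x y = ∑ y ∈ B, ∑ x ∈ A, wgt x y := Finset.sum_comm
      _ = ∑ x ∈ B, ∑ y ∈ A, wgt x y :=
          Finset.sum_congr rfl fun y _ => Finset.sum_congr rfl fun x _ => hsymm x y
  -- the ite-free description of the rows of the crossing sum
  have hrowrw : ∀ i : Fin m,
      (∑ i', if i ≠ i' then ∑ x ∈ S i, ∑ y ∈ S i', wgt x y else 0)
        = ∑ i', (if i' = i then 0 else ∑ x ∈ S i, ∑ y ∈ S i', wgt x y) := by
    intro i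
    refine Finset.sum_congr rfl fun i' _ => ?_
    rcases eq_or_ne i' i with h | h
    · simp [h]
    · simp [h, Ne.symm h]
  have hrow : ∀ i : Fin m,
      (∑ i', if i ≠ i' then ∑ x ∈ S i, ∑ y ∈ S i', wgt x y else 0)
        = ∑ x ∈ S i, ∑ y ∈ (S i)ᶜ, wgt x y := by
    intro i
    rw [hrowrw i, h3]
    have h2 : ∑ i', ∑ x ∈ S i, ∑ y ∈ S i', wgt x y
        = ∑ x ∈ S i, ∑ y, wgt x y := by
      rw [Finset.sum_comm]
      exact Finset.sum_congr rfl fun x _ => key (wgt x)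
    rw [h2, ← Finset.sum_sub_distrib]
    refine Finset.sum_congr rfl fun x _ => ?_
    have := Finset.sum_add_sum_compl (S i) (wgt x)
    linarith
  have hcrossEq : (∑ i, ∑ j, if i ≠ j then ∑ x ∈ S i, ∑ y ∈ S j, wgt x y else 0)
      = ∑ i, ∑ x ∈ S i, ∑ y ∈ (S i)ᶜ, wgt x y :=
    Finset.sum_congr rfl fun i _ => hrow i
  have hcrossnn : 0 ≤ ∑ i, ∑ j, if i ≠ j then ∑ x ∈ S i, ∑ y ∈ S j, wgt x y else 0 := by
    rw [hcrossEq]; exact Finset.sum_nonneg fun i _ => hEnn _ _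
  have hε : 0 < ε := lt_of_le_of_lt hcrossnn hcross
  have hlam : 0 < lam := by linarith
  -- Step 1: some part has measure > 1/2
  have hex : ∃ j, 1 / 2 < ∑ x ∈ S j, f x := by
    by_contra hno
    push_neg at hno
    have hle : ∀ i, lam * (∑ x ∈ S i, f x) ≤ 2 * ∑ x ∈ S i, ∑ y ∈ (S i)ᶜ, wgt x y := by
      intro i
      rcases (Finset.sum_nonneg fun x _ => hfnn x : (0:ℝ) ≤ ∑ x ∈ S i, f x).lt_or_eq
        with hp | hp
      · exact hexp (S i) hp (hno i)
      · rw [← hp, mul_zero]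
        have := hEnn (S i) (S i)ᶜ
        linarith
    have hsum := Finset.sum_le_sum fun i (_ : i ∈ Finset.univ) => hle i
    rw [← Finset.mul_sum, ← Finset.mul_sum, hpart] at hsum
    rw [hcrossEq] at hcross
    linarith
  obtain ⟨j, hj⟩ := hex
  refine ⟨j, ?_⟩
  have hcompl : ∑ x ∈ (S j)ᶜ, f x = 1 - ∑ x ∈ S j, f x := by
    have := Finset.sum_add_sum_compl (S j) f
    linarith
  rcases (Finset.sum_nonneg fun x _ => hfnn x : (0:ℝ) ≤ ∑ x ∈ (S j)ᶜ, f x).lt_or_eq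
    with h0 | h0
  · -- complement has positive measure
    have hhalf : ∑ x ∈ (S j)ᶜ, f x ≤ 1 / 2 := by linarith
    have hexpT := hexp (S j)ᶜ h0 hhalf
    rw [compl_compl] at hexpT
    -- bound 2 * E(T, S j) by the crossing sum
    have ha : ∑ x ∈ (S j)ᶜ, ∑ y ∈ S j, wgt x y
        = ∑ i, (if i = j then 0 else ∑ x ∈ S i, ∑ y ∈ S j, wgt x y) := by
      rw [h3]
      have h2 : ∑ i, ∑ x ∈ S i, ∑ y ∈ S j, wgt x y = ∑ x, ∑ y ∈ S j, wgt x y :=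
        key _
      have hsplit := Finset.sum_add_sum_compl (S j) (fun x => ∑ y ∈ S j, wgt x y)
      rw [h2]
      linarith
    set row : Fin m → ℝ :=
      fun i => ∑ i', if i ≠ i' then ∑ x ∈ S i, ∑ y ∈ S i', wgt x y else 0 with hrowdef
    have hsplitcross : row j + ∑ i ∈ Finset.univ.erase j, row i
        = ∑ i, ∑ i', if i ≠ i' then ∑ x ∈ S i, ∑ y ∈ S i', wgt x y else 0 :=
      Finset.add_sum_erase Finset.univ row (Finset.mem_univ j)
    have hrowj : row j = ∑ x ∈ (S j)ᶜ, ∑ y ∈ S j, wgt x y := by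
      exact (hrow j).trans (hsym2 _ _)
    have hterm : ∀ i ∈ Finset.univ.erase j,
        (if i = j then 0 else ∑ x ∈ S i, ∑ y ∈ S j, wgt x y) ≤ row i := by
      intro i hi
      have hij : i ≠ j := (Finset.mem_erase.mp hi).1
      rw [if_neg hij]
      calc ∑ x ∈ S i, ∑ y ∈ S j, wgt x y
          = (if i ≠ j then ∑ x ∈ S i, ∑ y ∈ S j, wgt x y else 0) := (if_pos hij).symm
        _ ≤ ∑ i', if i ≠ i' then ∑ x ∈ S i, ∑ y ∈ S i', wgt x y else 0 :=
            Finset.single_le_sum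
              (f := fun i' => if i ≠ i' then ∑ x ∈ S i, ∑ y ∈ S i', wgt x y else 0)
              (fun i' _ => by
                show 0 ≤ if i ≠ i' then ∑ x ∈ S i, ∑ y ∈ S i', wgt x y else 0
                by_cases h : i ≠ i'
                · rw [if_pos h]; exact hEnn _ _
                · rw [if_neg h])
              (Finset.mem_univ j)
        _ = row i := rfl
    have hsumterm : ∑ i ∈ Finset.univ.erase j,
        (if i = j then 0 else ∑ x ∈ S i, ∑ y ∈ S j, wgt x y)
        ≤ ∑ i ∈ Finset.univ.erase j, row i := Finset.sum_le_sum hterm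
    have herase : ∑ i ∈ Finset.univ.erase j,
        (if i = j then 0 else ∑ x ∈ S i, ∑ y ∈ S j, wgt x y)
        = ∑ i, (if i = j then 0 else ∑ x ∈ S i, ∑ y ∈ S j, wgt x y) :=
      Finset.sum_erase Finset.univ (by simp)
    have hbound : 2 * (∑ x ∈ (S j)ᶜ, ∑ y ∈ S j, wgt x y)
        ≤ ∑ i, ∑ i', if i ≠ i' then ∑ x ∈ S i, ∑ y ∈ S i', wgt x y else 0 := by
      rw [← hsplitcross, hrowj]
      rw [ha, ← herase]
      linarith
    have hfinal : lam * (∑ x ∈ (S j)ᶜ, f x) < ε := by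
      calc lam * (∑ x ∈ (S j)ᶜ, f x) ≤ 2 * ∑ x ∈ (S j)ᶜ, ∑ y ∈ S j, wgt x y := hexpT
        _ ≤ _ := hbound
        _ < ε := hcross
    have : ∑ x ∈ (S j)ᶜ, f x < ε / lam := by
      rw [lt_div_iff₀ hlam]
      linarith [hfinal]
    linarith
  · -- complement has zero measure
    have h1 : ∑ x ∈ S j, f x = 1 := by linarith
    have h2 : 0 ≤ ε / lam := by positivity
    linarith
end

section
/- Let X be a finite pure weighted d-partite simplicial complex of dimension d−1, let k, ℓ be integers with k+2 ≤ ℓ ≤ d, let β, p ∈ (0,1], and let Γ be a group (abelian if k > 1). Let 𝓕 be the set of ℓ-element color sets F ⊆ {0,…,d−1} such that X^F is (k,β)-locally coboundary expanding with respect to Γ, and assume that a uniformly random ℓ-element color set lies in 𝓕 with probability at least p. Let f ∈ C^k(X,Γ) with wt(δf) = ε. Then there exists F ∈ 𝓕 such that for every j = 1,…,k+2 for which the event {t ∈ X(k+1) : |col(t) ∩ F| = j} is nonempty, the conditional probability Pr_{t∈X(k+1)}[δf(t) ≠ 0 given |col(t) ∩ F| = j] is at most (k+2)·ε/p. -/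
open scoped Classical BigOperators

universe u v w

/-! ### Auxiliary lemmas for Statement 14 -/

section Aux14

lemma ite_inst_irrel {α : Sort*} {p : Prop} (i1 i2 : Decidable p) (a b : α) :
    @ite _ p i1 a b = @ite _ p i2 a b := by
  rw [Subsingleton.elim i1 i2]

/-- Permutation gadget: a pair of mutually inverse maps on `range d` carrying `Fa` to `Fb`. -/
lemma perm_gadget (d : ℕ) (Fa Fb : Finset ℕ) (ha : Fa ⊆ Finset.range d) (hb : Fb ⊆ Finset.range d)
    (hc : Fa.card = Fb.card) :
    ∃ g g' : ℕ → ℕ, (∀ y ∈ Finset.range d, g y ∈ Finset.range d) ∧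
      (∀ y ∈ Finset.range d, g' y ∈ Finset.range d) ∧
      (∀ y ∈ Finset.range d, g' (g y) = y) ∧
      (∀ y ∈ Finset.range d, g (g' y) = y) ∧
      (∀ y ∈ Finset.range d, (g y ∈ Fb ↔ y ∈ Fa)) := by
  classical
  have hcs : (Finset.range d \ Fa).card = (Finset.range d \ Fb).card := by
    rw [Finset.card_sdiff_of_subset ha, Finset.card_sdiff_of_subset hb, hc]
  let e1 : {x // x ∈ Fa} ≃ {x // x ∈ Fb} := Finset.equivOfCardEq hc
  let e2 : {x // x ∈ Finset.range d \ Fa} ≃ {x // x ∈ Finset.range d \ Fb} :=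
    Finset.equivOfCardEq hcs
  refine ⟨fun y => if h : y ∈ Fa then (e1 ⟨y, h⟩ : ℕ)
      else if h2 : y ∈ Finset.range d \ Fa then (e2 ⟨y, h2⟩ : ℕ) else y,
    fun y => if h : y ∈ Fb then (e1.symm ⟨y, h⟩ : ℕ)
      else if h2 : y ∈ Finset.range d \ Fb then (e2.symm ⟨y, h2⟩ : ℕ) else y, ?_, ?_, ?_, ?_, ?_⟩
  · intro y hy
    by_cases h : y ∈ Fa
    · simpa [h] using hb (e1 ⟨y, h⟩).2
    · have h2 : y ∈ Finset.range d \ Fa := Finset.mem_sdiff.2 ⟨hy, h⟩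
      simp only [dif_neg h, dif_pos h2]
      exact (Finset.mem_sdiff.1 (e2 ⟨y, h2⟩).2).1
  · intro y hy
    by_cases h : y ∈ Fb
    · simpa [h] using ha (e1.symm ⟨y, h⟩).2
    · have h2 : y ∈ Finset.range d \ Fb := Finset.mem_sdiff.2 ⟨hy, h⟩
      simp only [dif_neg h, dif_pos h2]
      exact (Finset.mem_sdiff.1 (e2.symm ⟨y, h2⟩).2).1
  · intro y hy
    by_cases h : y ∈ Fa
    · have hmem : ((e1 ⟨y, h⟩ : ℕ)) ∈ Fb := (e1 ⟨y, h⟩).2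
      simp only [dif_pos h, dif_pos hmem]
      have : (⟨(e1 ⟨y, h⟩ : ℕ), hmem⟩ : {x // x ∈ Fb}) = e1 ⟨y, h⟩ := Subtype.ext rfl
      rw [this, Equiv.symm_apply_apply]
    · have h2 : y ∈ Finset.range d \ Fa := Finset.mem_sdiff.2 ⟨hy, h⟩
      have hmem : ((e2 ⟨y, h2⟩ : ℕ)) ∈ Finset.range d \ Fb := (e2 ⟨y, h2⟩).2
      have hnb : ((e2 ⟨y, h2⟩ : ℕ)) ∉ Fb := (Finset.mem_sdiff.1 hmem).2
      simp only [dif_neg h, dif_pos h2, dif_neg hnb, dif_pos hmem]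
      have : (⟨(e2 ⟨y, h2⟩ : ℕ), hmem⟩ : {x // x ∈ Finset.range d \ Fb}) = e2 ⟨y, h2⟩ :=
        Subtype.ext rfl
      rw [this, Equiv.symm_apply_apply]
  · intro y hy
    by_cases h : y ∈ Fb
    · have hmem : ((e1.symm ⟨y, h⟩ : ℕ)) ∈ Fa := (e1.symm ⟨y, h⟩).2
      simp only [dif_pos h, dif_pos hmem]
      have : (⟨(e1.symm ⟨y, h⟩ : ℕ), hmem⟩ : {x // x ∈ Fa}) = e1.symm ⟨y, h⟩ := Subtype.ext rfl
      rw [this, Equiv.apply_symm_apply]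
    · have h2 : y ∈ Finset.range d \ Fb := Finset.mem_sdiff.2 ⟨hy, h⟩
      have hmem : ((e2.symm ⟨y, h2⟩ : ℕ)) ∈ Finset.range d \ Fa := (e2.symm ⟨y, h2⟩).2
      have hna : ((e2.symm ⟨y, h2⟩ : ℕ)) ∉ Fa := (Finset.mem_sdiff.1 hmem).2
      simp only [dif_neg h, dif_pos h2, dif_neg hna, dif_pos hmem]
      have : (⟨(e2.symm ⟨y, h2⟩ : ℕ), hmem⟩ : {x // x ∈ Finset.range d \ Fa}) = e2.symm ⟨y, h2⟩ :=
        Subtype.ext rfl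
      rw [this, Equiv.apply_symm_apply]
  · intro y hy
    by_cases h : y ∈ Fa
    · simpa [h] using (e1 ⟨y, h⟩).2
    · have h2 : y ∈ Finset.range d \ Fa := Finset.mem_sdiff.2 ⟨hy, h⟩
      simp only [dif_neg h, dif_pos h2]
      simpa [h] using (Finset.mem_sdiff.1 (e2 ⟨y, h2⟩).2).2

lemma inter_transport (d : ℕ) (g : ℕ → ℕ) (Fa Fb C : Finset ℕ) (hC : C ⊆ Finset.range d)
    (hiff : ∀ y ∈ Finset.range d, (g y ∈ Fb ↔ y ∈ Fa)) :
    Finset.image g C ∩ Fb = Finset.image g (C ∩ Fa) := by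
  ext z
  simp only [Finset.mem_inter, Finset.mem_image]
  constructor
  · rintro ⟨⟨y, hyC, rfl⟩, hzb⟩
    exact ⟨y, ⟨hyC, (hiff y (hC hyC)).1 hzb⟩, rfl⟩
  · rintro ⟨y, hy, rfl⟩
    obtain ⟨hyC, hya⟩ := hy
    exact ⟨⟨y, hyC, rfl⟩, (hiff y (hC hyC)).2 hya⟩

lemma card_inter_transport (d : ℕ) (g g' : ℕ → ℕ) (Fa Fb C : Finset ℕ)
    (hC : C ⊆ Finset.range d)
    (hginv : ∀ y ∈ Finset.range d, g' (g y) = y)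
    (hiff : ∀ y ∈ Finset.range d, (g y ∈ Fb ↔ y ∈ Fa)) :
    (Finset.image g C ∩ Fb).card = (C ∩ Fa).card := by
  rw [inter_transport d g Fa Fb C hC hiff]
  apply Finset.card_image_of_injOn
  intro x hx y hy hxy
  have hx' := hC (Finset.mem_inter.1 hx).1
  have hy' := hC (Finset.mem_inter.1 hy).1
  rw [← hginv x hx', ← hginv y hy', hxy]

/-- The number of `ℓ`-subsets of `range d` meeting a fixed set `C` in exactly `j` colors
only depends on the cardinality of `C`. -/
lemma count_filter_inter (d ℓ j : ℕ) (C C' : Finset ℕ) (hC : C ⊆ Finset.range d)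
    (hC' : C' ⊆ Finset.range d) (hcc : C.card = C'.card) :
    (((Finset.range d).powersetCard ℓ).filter fun F => (C ∩ F).card = j).card =
      (((Finset.range d).powersetCard ℓ).filter fun F => (C' ∩ F).card = j).card := by
  obtain ⟨g, g', hg, hg', hgg', hg'g, hiff⟩ := perm_gadget d C C' hC hC' hcc
  have hiff' : ∀ y ∈ Finset.range d, (g' y ∈ C ↔ y ∈ C') := by
    intro y hy
    rw [← hiff (g' y) (hg' y hy), hg'g y hy]
  apply Finset.card_bij' (fun F _ => Finset.image g F) (fun F _ => Finset.image g' F)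
  · intro F hF
    obtain ⟨hFsub, hFcard⟩ := Finset.mem_powersetCard.1 (Finset.mem_filter.1 hF).1
    have hcond := (Finset.mem_filter.1 hF).2
    refine Finset.mem_filter.2 ⟨Finset.mem_powersetCard.2 ⟨?_, ?_⟩, ?_⟩
    · intro z hz
      obtain ⟨y, hy, rfl⟩ := Finset.mem_image.1 hz
      exact hg y (hFsub hy)
    · rw [Finset.card_image_of_injOn (fun x hx y hy hxy => by
        rw [← hgg' x (hFsub hx), ← hgg' y (hFsub hy), hxy])]
      exact hFcard
    · rw [Finset.inter_comm, card_inter_transport d g g' C C' F hFsub hgg' hiff,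
        Finset.inter_comm]
      exact hcond
  · intro F hF
    obtain ⟨hFsub, hFcard⟩ := Finset.mem_powersetCard.1 (Finset.mem_filter.1 hF).1
    have hcond := (Finset.mem_filter.1 hF).2
    refine Finset.mem_filter.2 ⟨Finset.mem_powersetCard.2 ⟨?_, ?_⟩, ?_⟩
    · intro z hz
      obtain ⟨y, hy, rfl⟩ := Finset.mem_image.1 hz
      exact hg' y (hFsub hy)
    · rw [Finset.card_image_of_injOn (fun x hx y hy hxy => by
        rw [← hg'g x (hFsub hx), ← hg'g y (hFsub hy), hxy])]
      exact hFcard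
    · rw [Finset.inter_comm, card_inter_transport d g' g C' C F hFsub hg'g hiff',
        Finset.inter_comm]
      exact hcond
  · intro F hF
    obtain ⟨hFsub, _⟩ := Finset.mem_powersetCard.1 (Finset.mem_filter.1 hF).1
    rw [Finset.image_image]
    calc Finset.image (g' ∘ g) F = Finset.image id F :=
          Finset.image_congr (fun x hx => hgg' x (hFsub hx))
      _ = F := Finset.image_id
  · intro F hF
    obtain ⟨hFsub, _⟩ := Finset.mem_powersetCard.1 (Finset.mem_filter.1 hF).1
    rw [Finset.image_image]
    calc Finset.image (g ∘ g') F = Finset.image id F :=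
          Finset.image_congr (fun x hx => hg'g x (hFsub hx))
      _ = F := Finset.image_id

variable {V : Type w} [Fintype V] [DecidableEq V]

lemma inducedWeight_nonneg (X : WSC V) (hw : ∀ s, 0 ≤ X.weight s) (t : Finset V) :
    0 ≤ X.inducedWeight t := by
  apply Finset.sum_nonneg
  intro s _
  by_cases h : t ⊆ s
  · simp only [if_pos h]; exact hw s
  · simp only [if_neg h]; exact le_rfl

lemma tupleWeight_nonneg (X : WSC V) (hw : ∀ s, 0 ≤ X.weight s) {n : ℕ} (σ : Fin n → V) :
    0 ≤ X.tupleWeight σ := by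
  unfold WSC.tupleWeight
  split
  · exact inducedWeight_nonneg X hw _
  · exact le_rfl

lemma tupleWeight_pos (X : WSC V) {d : ℕ} (hpure : X.IsPureDim d) {n : ℕ} (σ : Fin n → V)
    (hσ : X.IsFaceTuple σ) : 0 < X.tupleWeight σ := by
  obtain ⟨-, -, hext, hw0, -, htop⟩ := hpure
  obtain ⟨m, hm, hsub, hcard⟩ := hext _ hσ.2
  have hwm : 0 < X.weight m := htop m hm hcard
  have h1 : X.weight m ≤ X.inducedWeight (Finset.image σ Finset.univ) := by
    have := Finset.single_le_sum (f := fun s : Finset V =>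
      if Finset.image σ Finset.univ ⊆ s then X.weight s else 0)
      (fun s _ => by
        by_cases h : Finset.image σ Finset.univ ⊆ s
        · simp only [if_pos h]; exact hw0 s
        · simp only [if_neg h]; exact le_rfl) (Finset.mem_univ m)
    simpa [WSC.inducedWeight, hsub] using this
  unfold WSC.tupleWeight
  rw [if_pos hσ]
  linarith

lemma exists_facetuple (X : WSC V) (d : ℕ) (hd : 1 ≤ d) (hpure : X.IsPureDim (d - 1))
    (n : ℕ) (hn : n ≤ d) : ∃ σ : Fin n → V, X.IsFaceTuple σ := by
  obtain ⟨hempty, hdc, hext, -, -, -⟩ := hpure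
  obtain ⟨m, hm, -, hcard⟩ := hext ∅ hempty
  have hcard' : m.card = d := by omega
  obtain ⟨t, hts, htc⟩ := Finset.exists_subset_card_eq (show n ≤ m.card by omega)
  have htf : t ∈ X.faces := hdc m hm t hts
  have hinj : Function.Injective (fun i : Fin n => (t.equivFin.symm (Fin.cast htc.symm i) : V)) := by
    intro a b hab
    have h1 := t.equivFin.symm.injective (Subtype.ext hab)
    have h2 := congrArg Fin.val h1
    exact Fin.ext h2
  refine ⟨fun i => (t.equivFin.symm (Fin.cast htc.symm i) : V), hinj, ?_⟩
  have hsub : Finset.image (fun i : Fin n => (t.equivFin.symm (Fin.cast htc.symm i) : V))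
      Finset.univ ⊆ t := by
    intro x hx
    obtain ⟨i, -, rfl⟩ := Finset.mem_image.1 hx
    exact (t.equivFin.symm _).2
  have : Finset.image (fun i : Fin n => (t.equivFin.symm (Fin.cast htc.symm i) : V))
      Finset.univ = t := by
    apply Finset.eq_of_subset_of_card_le hsub
    rw [Finset.card_image_of_injective _ hinj, Finset.card_univ, Fintype.card_fin, htc]
  rw [this]; exact htf

lemma colset_spec (X : WSC V) {d : ℕ} (col : V → ℕ) (hpart : X.IsPartite d col) {n : ℕ}
    (σ : Fin n → V) (hσ : X.IsFaceTuple σ) :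
    Finset.image col (Finset.image σ Finset.univ) ⊆ Finset.range d ∧
      (Finset.image col (Finset.image σ Finset.univ)).card = n := by
  constructor
  · intro y hy
    obtain ⟨x, -, rfl⟩ := Finset.mem_image.1 hy
    exact Finset.mem_range.2 (hpart.1 x)
  · rw [Finset.card_image_of_injOn (hpart.2 _ hσ.2), Finset.card_image_of_injective _ hσ.1,
      Finset.card_univ, Fintype.card_fin]

lemma top_face_spec (X : WSC V) {d : ℕ} (hd : 1 ≤ d) (col : V → ℕ)
    (hpure : X.IsPureDim (d - 1)) (hpart : X.IsPartite d col) {s : Finset V}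
    (hws : X.weight s ≠ 0) :
    s ∈ X.faces ∧ s.card = d ∧ Finset.image col s = Finset.range d ∧
      Set.InjOn col ↑s ∧ s.Nonempty := by
  obtain ⟨hsf, hscard⟩ := hpure.2.2.2.2.1 s hws
  have hcard : s.card = d := by omega
  have hinj := hpart.2 s hsf
  have hsub : Finset.image col s ⊆ Finset.range d := by
    intro y hy
    obtain ⟨x, -, rfl⟩ := Finset.mem_image.1 hy
    exact Finset.mem_range.2 (hpart.1 x)
  have himg : Finset.image col s = Finset.range d := by
    apply Finset.eq_of_subset_of_card_le hsub
    rw [Finset.card_image_of_injOn hinj, hcard, Finset.card_range]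
  exact ⟨hsf, hcard, himg, hinj, Finset.card_pos.1 (by omega)⟩

lemma exists_ic {d : ℕ} (col : V → ℕ) (s : Finset V) (hne : s.Nonempty)
    (hinj : Set.InjOn col ↑s) (himg : Finset.image col s = Finset.range d) :
    ∃ ic : ℕ → V, (∀ y ∈ Finset.range d, ic y ∈ s ∧ col (ic y) = y) ∧
      ∀ x ∈ s, ic (col x) = x := by
  classical
  obtain ⟨x₀, hx₀⟩ := hne
  refine ⟨fun y => if h : ∃ x ∈ s, col x = y then h.choose else x₀, ?_, ?_⟩
  · intro y hy
    have h : ∃ x ∈ s, col x = y := by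
      rw [← himg] at hy
      simpa [Finset.mem_image] using hy
    simp only [dif_pos h]
    exact ⟨h.choose_spec.1, h.choose_spec.2⟩
  · intro x hx
    have h : ∃ x' ∈ s, col x' = col x := ⟨x, hx, rfl⟩
    simp only [dif_pos h]
    exact hinj (Finset.mem_coe.2 h.choose_spec.1) (Finset.mem_coe.2 hx) h.choose_spec.2

/-- The number of injective tuples in a top face whose color set meets `F` in `j` colors
depends only on `|F|`. -/
lemma cnt_const {d n j : ℕ} (col : V → ℕ) (s : Finset V) (hne : s.Nonempty)
    (hinj : Set.InjOn col ↑s) (himg : Finset.image col s = Finset.range d)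
    (Fa Fb : Finset ℕ) (ha : Fa ⊆ Finset.range d) (hb : Fb ⊆ Finset.range d)
    (hc : Fa.card = Fb.card) :
    (Finset.univ.filter fun σ : Fin n → V => Function.Injective σ ∧
        Finset.image σ Finset.univ ⊆ s ∧
        (Finset.image col (Finset.image σ Finset.univ) ∩ Fa).card = j).card =
    (Finset.univ.filter fun σ : Fin n → V => Function.Injective σ ∧
        Finset.image σ Finset.univ ⊆ s ∧
        (Finset.image col (Finset.image σ Finset.univ) ∩ Fb).card = j).card := by
  classical
  obtain ⟨g, g', hg, hg', hgg', hg'g, hiff⟩ := perm_gadget d Fa Fb ha hb hc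
  obtain ⟨ic, hic1, hic2⟩ := exists_ic col s hne hinj himg
  have hiff' : ∀ y ∈ Finset.range d, (g' y ∈ Fa ↔ y ∈ Fb) := by
    intro y hy
    rw [← hiff (g' y) (hg' y hy), hg'g y hy]
  have hcols : ∀ x ∈ s, col x ∈ Finset.range d := fun x hx =>
    himg ▸ Finset.mem_image_of_mem col hx
  set e : V → V := fun x => if x ∈ s then ic (g (col x)) else x with he
  set e' : V → V := fun x => if x ∈ s then ic (g' (col x)) else x with he'
  have hes : ∀ x ∈ s, e x ∈ s ∧ col (e x) = g (col x) := by
    intro x hx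
    have h1 := hic1 (g (col x)) (hg _ (hcols x hx))
    simp only [he, if_pos hx]
    exact h1
  have hes' : ∀ x ∈ s, e' x ∈ s ∧ col (e' x) = g' (col x) := by
    intro x hx
    have h1 := hic1 (g' (col x)) (hg' _ (hcols x hx))
    simp only [he', if_pos hx]
    exact h1
  have he'e : ∀ x ∈ s, e' (e x) = x := by
    intro x hx
    obtain ⟨hm, hcol⟩ := hes x hx
    simp only [he', if_pos hm]
    rw [hcol, hgg' _ (hcols x hx), hic2 x hx]
  have hee' : ∀ x ∈ s, e (e' x) = x := by
    intro x hx
    obtain ⟨hm, hcol⟩ := hes' x hx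
    simp only [he, if_pos hm]
    rw [hcol, hg'g _ (hcols x hx), hic2 x hx]
  have key : ∀ (u u' : V → V) (gg gg' : ℕ → ℕ) (Fx Fy : Finset ℕ),
      (∀ x ∈ s, u x ∈ s ∧ col (u x) = gg (col x)) →
      (∀ x ∈ s, u' (u x) = x) →
      (∀ y ∈ Finset.range d, gg' (gg y) = y) →
      (∀ y ∈ Finset.range d, (gg y ∈ Fy ↔ y ∈ Fx)) →
      ∀ σ : Fin n → V, (Function.Injective σ ∧ Finset.image σ Finset.univ ⊆ s ∧
        (Finset.image col (Finset.image σ Finset.univ) ∩ Fx).card = j) →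
      (Function.Injective (u ∘ σ) ∧ Finset.image (u ∘ σ) Finset.univ ⊆ s ∧
        (Finset.image col (Finset.image (u ∘ σ) Finset.univ) ∩ Fy).card = j) := by
    intro u u' gg gg' Fx Fy hu hu'u hginv hiffx σ hσ
    obtain ⟨hσinj, hσsub, hσcard⟩ := hσ
    have hmemx : ∀ i : Fin n, σ i ∈ s := fun i =>
      hσsub (Finset.mem_image.2 ⟨i, Finset.mem_univ i, rfl⟩)
    refine ⟨?_, ?_, ?_⟩
    · intro a b hab
      apply hσinj
      have : u' (u (σ a)) = u' (u (σ b)) := congrArg u' hab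
      rwa [hu'u (σ a) (hmemx a), hu'u (σ b) (hmemx b)] at this
    · intro z hz
      obtain ⟨i, -, rfl⟩ := Finset.mem_image.1 hz
      exact (hu (σ i) (hmemx i)).1
    · have h1 : Finset.image (u ∘ σ) Finset.univ =
          Finset.image u (Finset.image σ Finset.univ) := by rw [Finset.image_image]
      have h2 : Finset.image col (Finset.image u (Finset.image σ Finset.univ)) =
          Finset.image gg (Finset.image col (Finset.image σ Finset.univ)) :=
        calc Finset.image col (Finset.image u (Finset.image σ Finset.univ))
            = Finset.image (col ∘ u) (Finset.image σ Finset.univ) := Finset.image_image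
          _ = Finset.image (gg ∘ col) (Finset.image σ Finset.univ) :=
              Finset.image_congr fun x hx => (hu x (hσsub hx)).2
          _ = Finset.image gg (Finset.image col (Finset.image σ Finset.univ)) :=
              Finset.image_image.symm
      have hCsub : Finset.image col (Finset.image σ Finset.univ) ⊆ Finset.range d := by
        intro y hy
        obtain ⟨x, hx, rfl⟩ := Finset.mem_image.1 hy
        exact hcols x (hσsub hx)
      rw [h1, h2, card_inter_transport d gg gg' Fx Fy _ hCsub hginv hiffx]
      exact hσcard
  apply Finset.card_bij' (fun σ _ => e ∘ σ) (fun τ _ => e' ∘ τ)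
  · intro σ hσ
    obtain ⟨-, hσP⟩ := Finset.mem_filter.1 hσ
    exact Finset.mem_filter.2 ⟨Finset.mem_univ _, key e e' g g' Fa Fb hes he'e hgg' hiff σ hσP⟩
  · intro τ hτ
    obtain ⟨-, hτP⟩ := Finset.mem_filter.1 hτ
    exact Finset.mem_filter.2 ⟨Finset.mem_univ _, key e' e g' g Fb Fa hes' hee' hg'g hiff' τ hτP⟩
  · intro σ hσ
    obtain ⟨-, -, hσsub, -⟩ := Finset.mem_filter.1 hσ |>.imp id id
    funext i
    exact he'e (σ i) (hσsub (Finset.mem_image.2 ⟨i, Finset.mem_univ i, rfl⟩))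
  · intro τ hτ
    obtain ⟨-, -, hτsub, -⟩ := Finset.mem_filter.1 hτ |>.imp id id
    funext i
    exact hee' (τ i) (hτsub (Finset.mem_image.2 ⟨i, Finset.mem_univ i, rfl⟩))

/-- Total weight of ordered `(n-1)`-faces. -/
noncomputable def TFn (X : WSC V) (n : ℕ) : ℝ := ∑ σ : Fin n → V, X.tupleWeight σ

/-- Weight of ordered faces satisfying `A`. -/
noncomputable def SFn (X : WSC V) (n : ℕ) (A : (Fin n → V) → Prop) : ℝ :=
  ∑ σ : Fin n → V, if A σ then X.tupleWeight σ else 0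

/-- Numerator of the conditional probability. -/
noncomputable def numFn (X : WSC V) (col : V → ℕ) (n : ℕ) (A : (Fin n → V) → Prop)
    (F : Finset ℕ) (j : ℕ) : ℝ :=
  ∑ σ : Fin n → V,
    if A σ ∧ (Finset.image col (Finset.image σ Finset.univ) ∩ F).card = j
    then X.tupleWeight σ else 0

/-- Denominator of the conditional probability. -/
noncomputable def denFn (X : WSC V) (col : V → ℕ) (n : ℕ) (F : Finset ℕ) (j : ℕ) : ℝ :=
  ∑ σ : Fin n → V,
    if (Finset.image col (Finset.image σ Finset.univ) ∩ F).card = j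
    then X.tupleWeight σ else 0

/-- the count `C(n,j)·C(d-n,ℓ-j)` of `ℓ`-subsets meeting a fixed `n`-subset in `j` colors. -/
def bCnt (d ℓ n j : ℕ) : ℕ :=
  (((Finset.range d).powersetCard ℓ).filter fun F => (Finset.range n ∩ F).card = j).card

lemma TFn_nonneg (X : WSC V) (hw : ∀ s, 0 ≤ X.weight s) (n : ℕ) : 0 ≤ TFn X n :=
  Finset.sum_nonneg fun σ _ => tupleWeight_nonneg X hw σ

lemma SFn_nonneg (X : WSC V) (hw : ∀ s, 0 ≤ X.weight s) (n : ℕ) (A : (Fin n → V) → Prop) :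
    0 ≤ SFn X n A :=
  Finset.sum_nonneg fun σ _ => by
    by_cases h : A σ
    · rw [if_pos h]; exact tupleWeight_nonneg X hw σ
    · rw [if_neg h]

lemma numFn_nonneg (X : WSC V) (hw : ∀ s, 0 ≤ X.weight s) (col : V → ℕ) (n : ℕ)
    (A : (Fin n → V) → Prop) (F : Finset ℕ) (j : ℕ) : 0 ≤ numFn X col n A F j :=
  Finset.sum_nonneg fun σ _ => by
    by_cases h : A σ ∧ (Finset.image col (Finset.image σ Finset.univ) ∩ F).card = j
    · rw [if_pos h]; exact tupleWeight_nonneg X hw σ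
    · rw [if_neg h]

lemma denFn_nonneg (X : WSC V) (hw : ∀ s, 0 ≤ X.weight s) (col : V → ℕ) (n : ℕ)
    (F : Finset ℕ) (j : ℕ) : 0 ≤ denFn X col n F j :=
  Finset.sum_nonneg fun σ _ => by
    by_cases h : (Finset.image col (Finset.image σ Finset.univ) ∩ F).card = j
    · rw [if_pos h]; exact tupleWeight_nonneg X hw σ
    · rw [if_neg h]

lemma numFn_le_SFn (X : WSC V) (hw : ∀ s, 0 ≤ X.weight s) (col : V → ℕ) (n : ℕ)
    (A : (Fin n → V) → Prop) (F : Finset ℕ) (j : ℕ) : numFn X col n A F j ≤ SFn X n A :=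
  Finset.sum_le_sum fun σ _ => by
    by_cases h : A σ ∧ (Finset.image col (Finset.image σ Finset.univ) ∩ F).card = j
    · rw [if_pos h, if_pos h.1]
    · rw [if_neg h]
      by_cases h2 : A σ
      · rw [if_pos h2]; exact tupleWeight_nonneg X hw σ
      · rw [if_neg h2]

lemma numFn_le_denFn (X : WSC V) (hw : ∀ s, 0 ≤ X.weight s) (col : V → ℕ) (n : ℕ)
    (A : (Fin n → V) → Prop) (F : Finset ℕ) (j : ℕ) :
    numFn X col n A F j ≤ denFn X col n F j :=
  Finset.sum_le_sum fun σ _ => by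
    by_cases h : A σ ∧ (Finset.image col (Finset.image σ Finset.univ) ∩ F).card = j
    · rw [if_pos h, if_pos h.2]
    · rw [if_neg h]
      by_cases h2 : (Finset.image col (Finset.image σ Finset.univ) ∩ F).card = j
      · rw [if_pos h2]; exact tupleWeight_nonneg X hw σ
      · rw [if_neg h2]

lemma twIte_decomp (X : WSC V) {n : ℕ} (P : (Fin n → V) → Prop) [DecidablePred P] :
    (∑ σ : Fin n → V, if P σ then X.tupleWeight σ else 0) =
      ∑ s : Finset V, X.weight s *
        ((Finset.univ.filter fun σ : Fin n → V => X.IsFaceTuple σ ∧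
          Finset.image σ Finset.univ ⊆ s ∧ P σ).card : ℝ) := by
  classical
  have h1 : (∑ σ : Fin n → V, if P σ then X.tupleWeight σ else 0) =
      ∑ σ : Fin n → V, ∑ s : Finset V,
        if X.IsFaceTuple σ ∧ Finset.image σ Finset.univ ⊆ s ∧ P σ then X.weight s else 0 := by
    apply Finset.sum_congr rfl
    intro σ _
    by_cases hP : P σ
    · rw [if_pos hP]
      unfold WSC.tupleWeight WSC.inducedWeight
      by_cases hft : X.IsFaceTuple σ
      · rw [if_pos hft]
        apply Finset.sum_congr rfl
        intro s _
        simp [hft, hP]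
      · rw [if_neg hft]
        simp [hft]
    · rw [if_neg hP]
      simp [hP]
  rw [h1, Finset.sum_comm]
  apply Finset.sum_congr rfl
  intro s _
  rw [Finset.sum_ite, Finset.sum_const, Finset.sum_const_zero, add_zero, nsmul_eq_mul,
    mul_comm]

/-- The denominator only depends on `|F|`. -/
lemma denFn_const (X : WSC V) {d : ℕ} (hd : 1 ≤ d) (col : V → ℕ)
    (hpure : X.IsPureDim (d - 1)) (hpart : X.IsPartite d col) {n j : ℕ}
    (Fa Fb : Finset ℕ) (ha : Fa ⊆ Finset.range d) (hb : Fb ⊆ Finset.range d)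
    (hcard : Fa.card = Fb.card) :
    denFn X col n Fa j = denFn X col n Fb j := by
  classical
  unfold denFn
  rw [twIte_decomp, twIte_decomp]
  apply Finset.sum_congr rfl
  intro s _
  by_cases hws : X.weight s = 0
  · rw [hws, zero_mul, zero_mul]
  · obtain ⟨hsf, hscard, himg, hinj, hne⟩ := top_face_spec X hd col hpure hpart hws
    congr 1
    have hfilter : ∀ F : Finset ℕ,
        (Finset.univ.filter fun σ : Fin n → V => X.IsFaceTuple σ ∧
          Finset.image σ Finset.univ ⊆ s ∧
          (Finset.image col (Finset.image σ Finset.univ) ∩ F).card = j) =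
        (Finset.univ.filter fun σ : Fin n → V => Function.Injective σ ∧
          Finset.image σ Finset.univ ⊆ s ∧
          (Finset.image col (Finset.image σ Finset.univ) ∩ F).card = j) := by
      intro F
      apply Finset.filter_congr
      intro σ _
      constructor
      · rintro ⟨hft, hsub, hcond⟩
        exact ⟨hft.1, hsub, hcond⟩
      · rintro ⟨hinj', hsub, hcond⟩
        exact ⟨⟨hinj', hpure.2.1 s hsf _ hsub⟩, hsub, hcond⟩
    rw [hfilter Fa, hfilter Fb]
    exact_mod_cast cnt_const col s hne hinj himg Fa Fb ha hb hcard

/-- Fubini: summing the numerator over all `ℓ`-subsets of colors. -/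
lemma sum_numFn (X : WSC V) {d ℓ n j : ℕ} (hnd : n ≤ d) (col : V → ℕ)
    (hpart : X.IsPartite d col) (A : (Fin n → V) → Prop) :
    ∑ F ∈ (Finset.range d).powersetCard ℓ, numFn X col n A F j =
      ((bCnt d ℓ n j : ℕ) : ℝ) * SFn X n A := by
  classical
  unfold numFn SFn bCnt
  rw [Finset.sum_comm, Finset.mul_sum]
  apply Finset.sum_congr rfl
  intro σ _
  by_cases hA : A σ
  · by_cases htw : X.tupleWeight σ = 0
    · simp [htw]
    · have hft : X.IsFaceTuple σ := by
        by_contra hft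
        exact htw (by unfold WSC.tupleWeight; rw [if_neg hft])
      obtain ⟨hsub, hcard⟩ := colset_spec X col hpart σ hft
      rw [if_pos hA]
      have hstep : ∀ F ∈ (Finset.range d).powersetCard ℓ,
          (if A σ ∧ (Finset.image col (Finset.image σ Finset.univ) ∩ F).card = j
            then X.tupleWeight σ else 0) =
          (if (Finset.image col (Finset.image σ Finset.univ) ∩ F).card = j
            then X.tupleWeight σ else 0) :=
        fun F _ => if_congr (and_iff_right hA) rfl rfl
      rw [Finset.sum_congr rfl hstep, Finset.sum_ite, Finset.sum_const,
        Finset.sum_const_zero, add_zero, nsmul_eq_mul]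
      have hcnt := count_filter_inter d ℓ j
        (Finset.image col (Finset.image σ Finset.univ)) (Finset.range n) hsub
        (by intro y hy
            exact Finset.mem_range.2 (lt_of_lt_of_le (Finset.mem_range.1 hy) hnd))
        (by rw [hcard, Finset.card_range])
      rw [hcnt]
  · simp [hA]

/-- Fubini: summing the denominator over all `ℓ`-subsets of colors. -/
lemma sum_denFn (X : WSC V) {d ℓ n j : ℕ} (hnd : n ≤ d) (col : V → ℕ)
    (hpart : X.IsPartite d col) :
    ∑ F ∈ (Finset.range d).powersetCard ℓ, denFn X col n F j =
      ((bCnt d ℓ n j : ℕ) : ℝ) * TFn X n := by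
  classical
  unfold denFn TFn bCnt
  rw [Finset.sum_comm, Finset.mul_sum]
  apply Finset.sum_congr rfl
  intro σ _
  by_cases htw : X.tupleWeight σ = 0
  · simp [htw]
  · have hft : X.IsFaceTuple σ := by
      by_contra hft
      exact htw (by unfold WSC.tupleWeight; rw [if_neg hft])
    obtain ⟨hsub, hcard⟩ := colset_spec X col hpart σ hft
    rw [Finset.sum_ite, Finset.sum_const, Finset.sum_const_zero, add_zero, nsmul_eq_mul]
    have hcnt := count_filter_inter d ℓ j
      (Finset.image col (Finset.image σ Finset.univ)) (Finset.range n) hsub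
      (by intro y hy
          exact Finset.mem_range.2 (lt_of_lt_of_le (Finset.mem_range.1 hy) hnd))
      (by rw [hcard, Finset.card_range])
    rw [hcnt]

/-- Key averaging argument for Statement 14. -/
lemma main_key {k ℓ d : ℕ} (hkl : k + 2 ≤ ℓ) (hld : ℓ ≤ d) {p : ℝ} (hp : 0 < p)
    (X : WSC V) (col : V → ℕ) (hpure : X.IsPureDim (d - 1)) (hpart : X.IsPartite d col)
    (G : Finset (Finset ℕ)) (hG : G ⊆ (Finset.range d).powersetCard ℓ)
    (hGcard : p * ((d.choose ℓ : ℕ) : ℝ) ≤ (G.card : ℝ))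
    (A : (Fin (k + 2) → V) → Prop) :
    ∃ F ∈ G, ∀ jj : ℕ, 1 ≤ jj → jj ≤ k + 2 →
      (∃ σ : Fin (k + 2) → V, X.IsFaceTuple σ ∧
        (Finset.image col (Finset.image σ Finset.univ) ∩ F).card = jj) →
      X.condProb (k + 2) A
          (fun σ => (Finset.image col (Finset.image σ Finset.univ) ∩ F).card = jj)
        ≤ ((k : ℝ) + 2) * X.faceProb (k + 2) A / p := by
  classical
  have hd : 1 ≤ d := by omega
  have hw0 : ∀ s, 0 ≤ X.weight s := hpure.2.2.2.1
  have hTpos : 0 < TFn X (k + 2) := by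
    obtain ⟨σ, hσ⟩ := exists_facetuple X d hd hpure (k + 2) (le_trans hkl hld)
    have h1 := tupleWeight_pos X hpure σ hσ
    have h2 := Finset.single_le_sum (f := fun σ : Fin (k + 2) → V => X.tupleWeight σ)
      (fun σ _ => tupleWeight_nonneg X hw0 σ) (Finset.mem_univ σ)
    unfold TFn
    linarith
  have hS0 : 0 ≤ SFn X (k + 2) A := SFn_nonneg X hw0 _ A
  set c : ℝ := ((k : ℝ) + 2) * (SFn X (k + 2) A / TFn X (k + 2)) / p with hc
  have hc0 : 0 ≤ c := by
    apply div_nonneg _ (le_of_lt hp)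
    exact mul_nonneg (by positivity) (div_nonneg hS0 (le_of_lt hTpos))
  have hNcard : (((Finset.range d).powersetCard ℓ).card : ℝ) = ((d.choose ℓ : ℕ) : ℝ) := by
    rw [Finset.card_powersetCard, Finset.card_range]
  have hNpos : 0 < (((Finset.range d).powersetCard ℓ).card : ℝ) := by
    rw [hNcard]
    exact_mod_cast Nat.choose_pos hld
  have hden_val : ∀ j : ℕ, ∀ F ∈ (Finset.range d).powersetCard ℓ,
      (((Finset.range d).powersetCard ℓ).card : ℝ) * denFn X col (k + 2) F j =
        ((bCnt d ℓ (k + 2) j : ℕ) : ℝ) * TFn X (k + 2) := by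
    intro j F hF
    have hconst : ∀ F' ∈ (Finset.range d).powersetCard ℓ,
        denFn X col (k + 2) F j = denFn X col (k + 2) F' j := by
      intro F' hF'
      obtain ⟨hFs, hFc⟩ := Finset.mem_powersetCard.1 hF
      obtain ⟨hFs', hFc'⟩ := Finset.mem_powersetCard.1 hF'
      exact denFn_const X hd col hpure hpart F F' hFs hFs' (hFc.trans hFc'.symm)
    calc (((Finset.range d).powersetCard ℓ).card : ℝ) * denFn X col (k + 2) F j
        = ∑ _F' ∈ (Finset.range d).powersetCard ℓ, denFn X col (k + 2) F j := by
          rw [Finset.sum_const, nsmul_eq_mul]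
      _ = ∑ F' ∈ (Finset.range d).powersetCard ℓ, denFn X col (k + 2) F' j :=
          Finset.sum_congr rfl hconst
      _ = ((bCnt d ℓ (k + 2) j : ℕ) : ℝ) * TFn X (k + 2) :=
          sum_denFn X (le_trans hkl hld) col hpart
  have hkey : ∃ F ∈ G, ∀ j ∈ Finset.Icc 1 (k + 2),
      numFn X col (k + 2) A F j ≤ c * denFn X col (k + 2) F j := by
    by_contra hcon
    push_neg at hcon
    set Bad : ℕ → Finset (Finset ℕ) := fun j =>
      G.filter (fun F => c * denFn X col (k + 2) F j < numFn X col (k + 2) A F j) with hBad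
    have hGsub : G ⊆ (Finset.Icc 1 (k + 2)).biUnion Bad := by
      intro F hF
      obtain ⟨j, hj, hlt⟩ := hcon F hF
      exact Finset.mem_biUnion.2 ⟨j, hj, Finset.mem_filter.2 ⟨hF, hlt⟩⟩
    have hjbound : ∀ j : ℕ, ((Bad j).card : ℝ) <
        p * (((Finset.range d).powersetCard ℓ).card : ℝ) / ((k : ℝ) + 2) := by
      intro j
      have hrhs : 0 < p * (((Finset.range d).powersetCard ℓ).card : ℝ) / ((k : ℝ) + 2) :=
        div_pos (mul_pos hp hNpos) (by positivity)
      rcases Finset.eq_empty_or_nonempty (Bad j) with hBe | hBne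
      · rw [hBe]
        simpa using hrhs
      · obtain ⟨F₀, hF₀⟩ := hBne
        have hF₀G := (Finset.mem_filter.1 hF₀).1
        have hF₀N : F₀ ∈ (Finset.range d).powersetCard ℓ := hG hF₀G
        have hlt₀ := (Finset.mem_filter.1 hF₀).2
        have hSpos : 0 < SFn X (k + 2) A := by
          by_contra h
          have hS0' : SFn X (k + 2) A = 0 := le_antisymm (not_lt.1 h) hS0
          have h1 : numFn X col (k + 2) A F₀ j ≤ 0 :=
            hS0' ▸ numFn_le_SFn X hw0 col (k + 2) A F₀ j
          have h2 : 0 ≤ c * denFn X col (k + 2) F₀ j :=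
            mul_nonneg hc0 (denFn_nonneg X hw0 col (k + 2) F₀ j)
          linarith
        have hbpos : 0 < ((bCnt d ℓ (k + 2) j : ℕ) : ℝ) := by
          by_contra h
          have hb0 : ((bCnt d ℓ (k + 2) j : ℕ) : ℝ) = 0 :=
            le_antisymm (not_lt.1 h) (by positivity)
          have h1 : (((Finset.range d).powersetCard ℓ).card : ℝ) *
              denFn X col (k + 2) F₀ j = 0 := by
            rw [hden_val j F₀ hF₀N, hb0, zero_mul]
          have h2 : denFn X col (k + 2) F₀ j = 0 := by
            rcases mul_eq_zero.1 h1 with h' | h'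
            · exact absurd h' (ne_of_gt hNpos)
            · exact h'
          have h3 : numFn X col (k + 2) A F₀ j ≤ 0 :=
            h2 ▸ numFn_le_denFn X hw0 col (k + 2) A F₀ j
          have h4 : 0 ≤ c * denFn X col (k + 2) F₀ j :=
            mul_nonneg hc0 (denFn_nonneg X hw0 col (k + 2) F₀ j)
          linarith
        have hcpos : 0 < c := by
          rw [hc]
          exact div_pos (mul_pos (by positivity) (div_pos hSpos hTpos)) hp
        have hBadN : Bad j ⊆ (Finset.range d).powersetCard ℓ := fun F hF =>
          hG (Finset.mem_filter.1 hF).1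
        have hsum1 : ∑ F ∈ Bad j, numFn X col (k + 2) A F j ≤
            ((bCnt d ℓ (k + 2) j : ℕ) : ℝ) * SFn X (k + 2) A := by
          rw [← sum_numFn X (le_trans hkl hld) col hpart A]
          exact Finset.sum_le_sum_of_subset_of_nonneg hBadN
            fun F _ _ => numFn_nonneg X hw0 col (k + 2) A F j
        have hdval : ∀ F ∈ Bad j, denFn X col (k + 2) F j =
            ((bCnt d ℓ (k + 2) j : ℕ) : ℝ) * TFn X (k + 2) /
              (((Finset.range d).powersetCard ℓ).card : ℝ) := by
          intro F hF
          rw [eq_div_iff (ne_of_gt hNpos), mul_comm]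
          exact hden_val j F (hBadN hF)
        have hsum2 : ((Bad j).card : ℝ) *
            (c * (((bCnt d ℓ (k + 2) j : ℕ) : ℝ) * TFn X (k + 2) /
              (((Finset.range d).powersetCard ℓ).card : ℝ))) <
            ∑ F ∈ Bad j, numFn X col (k + 2) A F j := by
          have hterm : ∀ F ∈ Bad j,
              c * (((bCnt d ℓ (k + 2) j : ℕ) : ℝ) * TFn X (k + 2) /
                (((Finset.range d).powersetCard ℓ).card : ℝ)) <
              numFn X col (k + 2) A F j := by
            intro F hF
            rw [← hdval F hF]
            exact (Finset.mem_filter.1 hF).2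
          calc ((Bad j).card : ℝ) *
              (c * (((bCnt d ℓ (k + 2) j : ℕ) : ℝ) * TFn X (k + 2) /
                (((Finset.range d).powersetCard ℓ).card : ℝ)))
              = ∑ _F ∈ Bad j, c * (((bCnt d ℓ (k + 2) j : ℕ) : ℝ) * TFn X (k + 2) /
                (((Finset.range d).powersetCard ℓ).card : ℝ)) := by
                rw [Finset.sum_const, nsmul_eq_mul]
            _ < ∑ F ∈ Bad j, numFn X col (k + 2) A F j :=
                Finset.sum_lt_sum_of_nonempty ⟨F₀, hF₀⟩ hterm
        have hchain := lt_of_lt_of_le hsum2 hsum1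
        have hceq : c * (((bCnt d ℓ (k + 2) j : ℕ) : ℝ) * TFn X (k + 2) /
            (((Finset.range d).powersetCard ℓ).card : ℝ)) =
            ((k : ℝ) + 2) * SFn X (k + 2) A * ((bCnt d ℓ (k + 2) j : ℕ) : ℝ) /
              (p * (((Finset.range d).powersetCard ℓ).card : ℝ)) := by
          rw [hc]
          have hT' : TFn X (k + 2) ≠ 0 := ne_of_gt hTpos
          have hp' : p ≠ 0 := ne_of_gt hp
          have hN'' : ((d.choose ℓ : ℕ) : ℝ) ≠ 0 := by
            have h := Nat.choose_pos hld
            exact ne_of_gt (by exact_mod_cast h)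
          field_simp
        rw [hceq] at hchain
        rw [lt_div_iff₀ (by positivity : (0 : ℝ) < (k : ℝ) + 2)]
        have hpn : (0 : ℝ) < p * (((Finset.range d).powersetCard ℓ).card : ℝ) :=
          mul_pos hp hNpos
        have hchain' : ((Bad j).card : ℝ) *
            (((k : ℝ) + 2) * SFn X (k + 2) A * ((bCnt d ℓ (k + 2) j : ℕ) : ℝ)) <
            ((bCnt d ℓ (k + 2) j : ℕ) : ℝ) * SFn X (k + 2) A *
              (p * (((Finset.range d).powersetCard ℓ).card : ℝ)) := by
          have hmul := mul_lt_mul_of_pos_right hchain hpn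
          have heq : ((Bad j).card : ℝ) *
              (((k : ℝ) + 2) * SFn X (k + 2) A * ((bCnt d ℓ (k + 2) j : ℕ) : ℝ) /
                (p * (((Finset.range d).powersetCard ℓ).card : ℝ))) *
              (p * (((Finset.range d).powersetCard ℓ).card : ℝ)) =
              ((Bad j).card : ℝ) *
                (((k : ℝ) + 2) * SFn X (k + 2) A * ((bCnt d ℓ (k + 2) j : ℕ) : ℝ)) := by
            rw [mul_assoc, div_mul_cancel₀ _ (ne_of_gt hpn)]
          rwa [heq] at hmul
        by_contra hcon2
        push_neg at hcon2
        have h6 := mul_le_mul_of_nonneg_left hcon2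
          (le_of_lt (mul_pos hbpos hSpos))
        nlinarith [hchain', h6]
    have hIccne : (Finset.Icc 1 (k + 2)).Nonempty := ⟨1, by simp⟩
    have h1 : (G.card : ℝ) ≤ ∑ j ∈ Finset.Icc 1 (k + 2), ((Bad j).card : ℝ) := by
      have ha := Finset.card_le_card hGsub
      have hb2 := Finset.card_biUnion_le (s := Finset.Icc 1 (k + 2)) (t := Bad)
      exact_mod_cast le_trans ha hb2
    have h2 : ∑ j ∈ Finset.Icc 1 (k + 2), ((Bad j).card : ℝ) <
        ∑ _j ∈ Finset.Icc 1 (k + 2),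
          p * (((Finset.range d).powersetCard ℓ).card : ℝ) / ((k : ℝ) + 2) :=
      Finset.sum_lt_sum_of_nonempty hIccne fun j _ => hjbound j
    have h3 : ∑ _j ∈ Finset.Icc 1 (k + 2),
        p * (((Finset.range d).powersetCard ℓ).card : ℝ) / ((k : ℝ) + 2) =
        p * (((Finset.range d).powersetCard ℓ).card : ℝ) := by
      rw [Finset.sum_const, Nat.card_Icc, nsmul_eq_mul]
      have h4 : ((k + 2 + 1 - 1 : ℕ) : ℝ) = (k : ℝ) + 2 := by push_cast; ring
      rw [h4]
      field_simp
    rw [h3, hNcard] at h2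
    linarith
  obtain ⟨F, hFG, hFgood⟩ := hkey
  refine ⟨F, hFG, ?_⟩
  intro jj hj1 hj2 hne
  obtain ⟨σ₀, hσ₀ft, hσ₀c⟩ := hne
  have hdenpos : 0 < denFn X col (k + 2) F jj := by
    have htp := tupleWeight_pos X hpure σ₀ hσ₀ft
    have hle := Finset.single_le_sum (f := fun σ : Fin (k + 2) → V =>
        if (Finset.image col (Finset.image σ Finset.univ) ∩ F).card = jj
        then X.tupleWeight σ else 0)
      (fun σ _ => by
        by_cases h : (Finset.image col (Finset.image σ Finset.univ) ∩ F).card = jj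
        · rw [if_pos h]; exact tupleWeight_nonneg X hw0 σ
        · rw [if_neg h])
      (Finset.mem_univ σ₀)
    rw [if_pos hσ₀c] at hle
    unfold denFn
    linarith
  have hmain : numFn X col (k + 2) A F jj ≤ c * denFn X col (k + 2) F jj :=
    hFgood jj (Finset.mem_Icc.2 ⟨hj1, hj2⟩)
  have hcond : X.condProb (k + 2) A
      (fun σ => (Finset.image col (Finset.image σ Finset.univ) ∩ F).card = jj) =
      numFn X col (k + 2) A F jj / denFn X col (k + 2) F jj := by
    unfold WSC.condProb numFn denFn
    refine congrArg₂ (· / ·) ?_ ?_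
    · exact Finset.sum_congr rfl fun σ _ => ite_inst_irrel _ _ _ _
    · exact Finset.sum_congr rfl fun σ _ => ite_inst_irrel _ _ _ _
  have hfp : X.faceProb (k + 2) A = SFn X (k + 2) A / TFn X (k + 2) := rfl
  rw [hcond, hfp, div_le_iff₀ hdenpos, ← hc]
  exact hmain

end Aux14

/-- If at least a `p`-fraction of the `ℓ`-element color sets give
`(k,β)`-locally coboundary expanding restrictions, then for every `f ∈ C^k(X,Γ)` there is
such a color set `F` for which each nonempty conditional probability
`Pr[δf(t) ≠ 0 ∣ |col(t) ∩ F| = j]`, `j = 1,…,k+2`, is at most `(k+2)·wt(δf)/p`. -/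
theorem stmt_14 {V : Type w} [Fintype V] [DecidableEq V]
    (k ℓ d : ℕ) (hkl : k + 2 ≤ ℓ) (hld : ℓ ≤ d)
    (β p : ℝ) (hβ : 0 < β ∧ β ≤ 1) (hp : 0 < p ∧ p ≤ 1)
    (X : WSC V) (col : V → ℕ) (hpure : X.IsPureDim (d - 1)) (hpart : X.IsPartite d col) :
    (∀ (Γ : Type u) [AddCommGroup Γ],
      p * ((d.choose ℓ : ℕ) : ℝ) ≤
        ((((Finset.range d).powersetCard ℓ).filter fun F =>
            X.LocCobExpanding col F k Γ β).card : ℝ) →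
      ∀ f : (Fin (k + 1) → V) → Γ, IsAsym f →
        ∃ F ∈ ((Finset.range d).powersetCard ℓ).filter
            (fun F => X.LocCobExpanding col F k Γ β),
          ∀ jj : ℕ, 1 ≤ jj → jj ≤ k + 2 →
            (∃ σ : Fin (k + 2) → V, X.IsFaceTuple σ ∧
              (Finset.image col (Finset.image σ Finset.univ) ∩ F).card = jj) →
            X.condProb (k + 2) (fun σ => cobound f σ ≠ 0)
                (fun σ => (Finset.image col (Finset.image σ Finset.univ) ∩ F).card = jj)
              ≤ ((k : ℝ) + 2) * X.cwt (cobound f) / p) ∧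
    (∀ (hk1 : k = 1), ∀ (Γ : Type u) [Group Γ],
      p * ((d.choose ℓ : ℕ) : ℝ) ≤
        ((((Finset.range d).powersetCard ℓ).filter fun F =>
            X.MLocCobExpanding₁ col F Γ β).card : ℝ) →
      ∀ f : (Fin 2 → V) → Γ, mAsym f →
        ∃ F ∈ ((Finset.range d).powersetCard ℓ).filter
            (fun F => X.MLocCobExpanding₁ col F Γ β),
          ∀ jj : ℕ, 1 ≤ jj → jj ≤ k + 2 →
            (∃ σ : Fin (k + 2) → V, X.IsFaceTuple σ ∧
              (Finset.image col (Finset.image σ Finset.univ) ∩ F).card = jj) →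
            X.condProb (k + 2) (fun σ => mCobound₁ f (fun t => σ (Fin.cast (by omega : 3 = k + 2) t)) ≠ 1)
                (fun σ => (Finset.image col (Finset.image σ Finset.univ) ∩ F).card = jj)
              ≤ ((k : ℝ) + 2) * X.faceProb 3 (fun σ => mCobound₁ f σ ≠ 1) / p) := by
  constructor
  · intro Γ _ hcard f hf
    exact main_key hkl hld hp.1 X col hpure hpart
      (((Finset.range d).powersetCard ℓ).filter fun F => X.LocCobExpanding col F k Γ β)
      (Finset.filter_subset _ _) hcard (fun σ => cobound f σ ≠ 0)
  · intro hk1 Γ _ hcard f hf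
    subst hk1
    exact main_key hkl hld hp.1 X col hpure hpart
      (((Finset.range d).powersetCard ℓ).filter fun F => X.MLocCobExpanding₁ col F Γ β)
      (Finset.filter_subset _ _) hcard
      (fun σ : Fin (1 + 2) → V =>
        mCobound₁ f (fun t => σ (Fin.cast (by omega : 3 = 1 + 2) t)) ≠ 1)
end

section
/- Let k ≥ 1 and let X be a finite pure d-dimensional simplicial complex with d ≥ k+1 in which, for every j, the probability distribution on X(j) is uniform. Set ε = max( sqrt(8·|X(k−1)|/|X(k)|), sqrt(9/|X(k+1)|) ) and assume ε ≤ 1/2. Then there exists f ∈ C^k(X, F_2) such that dist(f, δg) ≥ 1/2 − ε for every g ∈ C^{k−1}(X, F_2), while wt(δf) ≤ 1/2 + ε; consequently the coboundary expansion ratio wt(δf)/dist(f, B^k(X,F_2)) of this f is at most (1/2 + ε)/(1/2 − ε). -/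
open scoped Classical BigOperators

universe u v w

section DenseUpperBound

variable {V : Type w} [Fintype V] [DecidableEq V]

/-- the `m`-dimensional faces of a complex given by its face set. -/
def uFaces (faces : Finset (Finset V)) (m : ℕ) : Finset (Finset V) :=
  faces.filter fun s => s.card = m + 1

/-- probability of an event under the uniform distribution on `m`-dimensional faces. -/
noncomputable def uProb (faces : Finset (Finset V)) (m : ℕ) (A : Finset V → Prop) : ℝ :=
  (((uFaces faces m).filter A).card : ℝ) / ((uFaces faces m).card : ℝ)

/-- the coboundary map over `𝔽₂`: `δ f (s) = ∑_{v ∈ s} f (s \ {v})`. -/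
def deltaF2 (f : Finset V → ZMod 2) : Finset V → ZMod 2 := fun s =>
  ∑ x ∈ s, f (s.erase x)

end DenseUpperBound

/-!
Take `f ∈ C^k(X, 𝔽₂)` uniformly at random. For a fixed `g ∈ C^{k-1}`, `dist(f, δg)` counts
`|X(k)|` independent fair bits, so by the Chernoff bound it falls below `1/2 - ε` with
probability at most `exp(-2ε²|X(k)|)`; a union bound over the `2^|X(k-1)|` choices of `g`
keeps the total below `1/2` once `8|X(k-1)| ≤ ε²|X(k)|`. The bits `δf(s)`, `s ∈ X(k+1)`, are
pairwise independent and fair: two distinct `(k+1)`-faces are separated by a `k`-face of one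
that is not contained in the other. Chebyshev's inequality therefore bounds the probability
that `wt(δf) > 1/2 + ε` by `1/(4ε²|X(k+1)|) ≤ 1/36`, and some `f` avoids both events.
-/

open Finset Real

section HammingBall

variable {ι : Type*} [Fintype ι] [DecidableEq ι]

theorem sum_pow_hammingDist {β : Type*} [Fintype β] [DecidableEq β] (c : ι → β) (x : ℝ) :
    ∑ ω : ι → β, x ^ hammingDist ω c = (1 + (Fintype.card β - 1) * x) ^ Fintype.card ι := by
  have hcoord : ∀ b : β, ∑ z : β, (if z ≠ b then x else 1) = 1 + (Fintype.card β - 1) * x := by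
    intro b
    rw [Fintype.sum_eq_add_sum_compl b, if_neg (not_not.2 rfl),
      sum_congr rfl fun z hz => if_pos (by simpa using hz), sum_const, card_compl,
      card_singleton, nsmul_eq_mul, Nat.cast_sub (Fintype.card_pos_iff.2 ⟨b⟩)]
    push_cast
    ring
  calc ∑ ω : ι → β, x ^ hammingDist ω c
      = ∑ ω : ι → β, ∏ i, (if ω i ≠ c i then x else 1) := by
        refine sum_congr rfl fun ω _ => ?_
        simp only [hammingDist, prod_ite, prod_const, one_pow, mul_one]
    _ = ∏ i, ∑ z : β, (if z ≠ c i then x else 1) := by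
        rw [Fintype.prod_sum]
    _ = _ := by simp only [hcoord, prod_const, card_univ]

theorem card_hammingDist_lt_le_exp {β : Type*} [Fintype β] [DecidableEq β] (c : ι → β)
    {l : ℝ} (hl : 0 ≤ l) (a : ℝ) :
    (#{ω : ι → β | hammingDist ω c < a} : ℝ) ≤
      exp (l * a) * (1 + (Fintype.card β - 1) * exp (-l)) ^ Fintype.card ι := by
  calc (#{ω : ι → β | hammingDist ω c < a} : ℝ)
      = ∑ ω ∈ {ω : ι → β | hammingDist ω c < a}, 1 := by simp
    _ ≤ ∑ ω ∈ {ω : ι → β | hammingDist ω c < a}, exp (l * (a - hammingDist ω c)) :=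
        sum_le_sum fun ω hω => one_le_exp (mul_nonneg hl (by linarith [(mem_filter.mp hω).2]))
    _ ≤ ∑ ω : ι → β, exp (l * (a - hammingDist ω c)) :=
        sum_le_sum_of_subset_of_nonneg (filter_subset _ _) fun _ _ _ => (exp_pos _).le
    _ = exp (l * a) * ∑ ω : ι → β, exp (-l) ^ hammingDist ω c := by
        rw [mul_sum]
        refine sum_congr rfl fun ω _ => ?_
        rw [← exp_nat_mul, ← exp_add]
        ring_nf
    _ = _ := by rw [sum_pow_hammingDist]

theorem exp_mul_one_add_exp_neg_le (ε : ℝ) :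
    exp (4 * ε * (1 / 2 - ε)) * (1 + exp (-(4 * ε))) ≤ 2 * exp (-2 * ε ^ 2) := by
  have hcosh : exp (2 * ε) + exp (-(2 * ε)) ≤ 2 * exp (2 * ε ^ 2) := by
    have := cosh_le_exp_half_sq (2 * ε)
    rw [cosh_eq, show (2 * ε) ^ 2 / 2 = 2 * ε ^ 2 by ring] at this
    linarith
  calc exp (4 * ε * (1 / 2 - ε)) * (1 + exp (-(4 * ε)))
      = exp (-4 * ε ^ 2) * (exp (2 * ε) + exp (-(2 * ε))) := by
        rw [mul_add, mul_add, mul_one, ← exp_add, ← exp_add, ← exp_add]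
        ring_nf
    _ ≤ exp (-4 * ε ^ 2) * (2 * exp (2 * ε ^ 2)) := by gcongr
    _ = 2 * exp (-2 * ε ^ 2) := by
        rw [mul_left_comm, ← exp_add]
        ring_nf

theorem card_hammingDist_lt_le (c : ι → ZMod 2) {ε : ℝ} (hε : 0 ≤ ε) :
    (#{ω : ι → ZMod 2 | hammingDist ω c < (1 / 2 - ε) * Fintype.card ι} : ℝ) ≤
      2 ^ Fintype.card ι * exp (-2 * ε ^ 2 * Fintype.card ι) := by
  -- `l = 4ε` is the optimal exponential-moment parameter to first order in `ε`
  refine (card_hammingDist_lt_le_exp c (by positivity : 0 ≤ 4 * ε) _).trans ?_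
  rw [ZMod.card, show exp (4 * ε * ((1 / 2 - ε) * Fintype.card ι)) =
    exp (4 * ε * (1 / 2 - ε)) ^ Fintype.card ι by rw [← exp_nat_mul]; ring_nf]
  calc exp (4 * ε * (1 / 2 - ε)) ^ Fintype.card ι *
        (1 + ((2 : ℕ) - 1 : ℝ) * exp (-(4 * ε))) ^ Fintype.card ι
      = (exp (4 * ε * (1 / 2 - ε)) * (1 + exp (-(4 * ε)))) ^ Fintype.card ι := by
        rw [mul_pow]; norm_num
    _ ≤ (2 * exp (-2 * ε ^ 2)) ^ Fintype.card ι :=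
        pow_le_pow_left₀ (by positivity) (exp_mul_one_add_exp_neg_le ε) _
    _ = _ := by rw [mul_pow, ← exp_nat_mul]; ring_nf

theorem card_exists_hammingDist_lt_le {κ : Type*} [Fintype κ] (c : κ → ι → ZMod 2) {ε : ℝ}
    (hε : 0 ≤ ε) :
    (#{ω : ι → ZMod 2 | ∃ u, hammingDist ω (c u) < (1 / 2 - ε) * Fintype.card ι} : ℝ) ≤
      Fintype.card κ * (2 ^ Fintype.card ι * exp (-2 * ε ^ 2 * Fintype.card ι)) := by
  calc (#{ω : ι → ZMod 2 | ∃ u, hammingDist ω (c u) < (1 / 2 - ε) * Fintype.card ι} : ℝ)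
      ≤ ∑ u, (#{ω : ι → ZMod 2 | hammingDist ω (c u) < (1 / 2 - ε) * Fintype.card ι} : ℝ) := by
        exact_mod_cast (card_le_card fun ω hω => by simpa using hω).trans card_biUnion_le
    _ ≤ ∑ _u : κ, 2 ^ Fintype.card ι * exp (-2 * ε ^ 2 * Fintype.card ι) :=
        sum_le_sum fun u _ => card_hammingDist_lt_le (c u) hε
    _ = _ := by rw [sum_const, card_univ, nsmul_eq_mul]

theorem two_pow_mul_exp_le_half {m N : ℕ} {ε : ℝ} (hm : 0 < m) (h : 8 * m ≤ ε ^ 2 * N) :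
    (2 : ℝ) ^ m * exp (-2 * ε ^ 2 * N) ≤ 1 / 2 := by
  have h16 : 2 * exp (-16) ≤ 1 / 2 := by
    rw [exp_neg]
    have := add_one_le_exp 16
    rw [← div_eq_mul_inv, div_le_iff₀ (exp_pos 16)]
    linarith
  calc (2 : ℝ) ^ m * exp (-2 * ε ^ 2 * N)
      ≤ 2 ^ m * exp (-16) ^ m := by
        rw [← exp_nat_mul]
        exact mul_le_mul_of_nonneg_left (exp_le_exp.2 (by linarith)) (by positivity)
    _ = (2 * exp (-16)) ^ m := (mul_pow _ _ _).symm
    _ ≤ 2 * exp (-16) := pow_le_of_le_one (by positivity) (by linarith) hm.ne'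
    _ ≤ 1 / 2 := h16

end HammingBall

section BitSigns

variable {ι : Type*} [Fintype ι] [DecidableEq ι]

def bitSign (z : ZMod 2) : ℝ := if z = 0 then 1 else -1

theorem zmod_two_eq_zero_or_one (z : ZMod 2) : z = 0 ∨ z = 1 := by revert z; decide

theorem bitSign_add (a b : ZMod 2) : bitSign (a + b) = bitSign a * bitSign b := by
  rcases zmod_two_eq_zero_or_one a with rfl | rfl <;>
    rcases zmod_two_eq_zero_or_one b with rfl | rfl <;>
    simp [bitSign, show (1 : ZMod 2) + 1 = 0 from rfl]

theorem bitSign_sub (a b : ZMod 2) : bitSign (a - b) = bitSign a * bitSign b := by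
  rw [← bitSign_add, sub_eq_add_neg, ZMod.neg_eq_self_mod_two]

theorem bitSign_mul_self (a : ZMod 2) : bitSign a * bitSign a = 1 := by
  rw [← bitSign_sub, sub_self, bitSign, if_pos rfl]

theorem sum_bitSign {τ : Type*} (x : τ → ZMod 2) (T : Finset τ) :
    ∑ t ∈ T, bitSign (x t) = #T - 2 * #{t ∈ T | x t ≠ 0} := by
  have h : ∀ z : ZMod 2, bitSign z = 1 - 2 * if z ≠ 0 then 1 else 0 := fun z => by
    by_cases hz : z = 0 <;> norm_num [bitSign, hz]
  simp only [h, sum_sub_distrib, ← mul_sum, sum_boole, sum_const, nsmul_eq_mul, mul_one]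

theorem sum_bitSign_eq_zero {G : Type*} [AddGroup G] [Fintype G] {φ : G →+ ZMod 2}
    (hφ : φ ≠ 0) : ∑ g, bitSign (φ g) = 0 := by
  obtain ⟨e, he⟩ : ∃ e, φ e ≠ 0 := by simpa [DFunLike.ext_iff] using hφ
  have hflip : ∑ g, bitSign (φ (g + e)) = -∑ g, bitSign (φ g) := by
    rw [← sum_neg_distrib]
    refine sum_congr rfl fun g _ => ?_
    rw [map_add, bitSign_add, show bitSign (φ e) = -1 from if_neg he, mul_neg_one]
  linarith [Fintype.sum_equiv (Equiv.addRight e) (fun g => bitSign (φ (g + e)))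
    (fun g => bitSign (φ g)) fun _ => rfl]

theorem sum_sq_sum_bitSign {τ : Type*} (F : (ι → ZMod 2) →+ τ → ZMod 2) (T : Finset τ)
    (hF : ∀ s ∈ T, ∀ t ∈ T, s ≠ t → ∃ e, F e s ≠ F e t) :
    ∑ ω, (∑ t ∈ T, bitSign (F ω t)) ^ 2 = #T * 2 ^ Fintype.card ι := by
  have hcorr : ∀ s ∈ T, ∀ t ∈ T, ∑ ω, bitSign (F ω s) * bitSign (F ω t) =
      if s = t then 2 ^ Fintype.card ι else 0 := by
    intro s hs t ht
    split_ifs with hst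
    · subst hst
      simp [bitSign_mul_self]
    · obtain ⟨e, he⟩ := hF s hs t ht hst
      simp_rw [← bitSign_sub]
      refine sum_bitSign_eq_zero
        (φ := (Pi.evalAddMonoidHom (fun _ : τ => ZMod 2) s - Pi.evalAddMonoidHom _ t).comp F)
        fun h => he (sub_eq_zero.1 ?_)
      simpa using DFunLike.congr_fun h e
  calc ∑ ω, (∑ t ∈ T, bitSign (F ω t)) ^ 2
      = ∑ s ∈ T, ∑ t ∈ T, ∑ ω, bitSign (F ω s) * bitSign (F ω t) := by
        simp_rw [sq, sum_mul_sum]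
        rw [sum_comm]
        exact sum_congr rfl fun _ _ => sum_comm
    _ = ∑ _s ∈ T, (2 : ℝ) ^ Fintype.card ι := sum_congr rfl fun s hs => by
        rw [sum_congr rfl (hcorr s hs), sum_ite_eq T s, if_pos hs]
    _ = _ := by rw [sum_const, nsmul_eq_mul]

theorem card_half_add_lt_weight_mul_sq_le {τ : Type*} (F : (ι → ZMod 2) →+ τ → ZMod 2)
    (T : Finset τ) (hF : ∀ s ∈ T, ∀ t ∈ T, s ≠ t → ∃ e, F e s ≠ F e t) {a : ℝ} (ha : 0 < a) :
    (#{ω | (#T : ℝ) / 2 + a < #{t ∈ T | F ω t ≠ 0}} : ℝ) * (2 * a) ^ 2 ≤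
      #T * 2 ^ Fintype.card ι := by
  rw [← sum_sq_sum_bitSign F T hF, ← nsmul_eq_mul, ← sum_const]
  refine (sum_le_sum fun ω hω => ?_).trans
    (sum_le_sum_of_subset_of_nonneg (filter_subset _ _) fun _ _ _ => sq_nonneg _)
  have hω := (mem_filter.1 hω).2
  rw [sum_bitSign]
  nlinarith

end BitSigns

theorem exists_notMem_notMem_of_card_add_card_lt {α : Type*} [Fintype α] [DecidableEq α]
    {s t : Finset α} (h : #s + #t < Fintype.card α) : ∃ a, a ∉ s ∧ a ∉ t := by
  obtain ⟨a, -, ha⟩ := exists_mem_notMem_of_card_lt_card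
    ((card_union_le s t).trans_lt (h.trans_eq card_univ.symm))
  exact ⟨a, by simpa [not_or] using ha⟩

section RandomCochains

variable {V : Type*} [DecidableEq V] {faces : Finset (Finset V)} {k : ℕ}

theorem deltaF2_add (f g : Finset V → ZMod 2) : deltaF2 (f + g) = deltaF2 f + deltaF2 g := by
  funext s
  simp [deltaF2, sum_add_distrib]

theorem deltaF2_single_of_not_subset {r s : Finset V} (h : ¬r ⊆ s) :
    deltaF2 (Pi.single r 1) s = 0 :=
  sum_eq_zero fun x _ => Pi.single_eq_of_ne (fun hx => h (by rw [← hx]; exact erase_subset x s)) 1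

theorem deltaF2_single_of_subset {r s : Finset V} (h : r ⊆ s) (hcard : #r + 1 = #s) :
    deltaF2 (Pi.single r 1) s = 1 := by
  obtain ⟨a, ha, rfl⟩ := exists_eq_insert_iff.2 ⟨h, hcard⟩
  rw [deltaF2, sum_insert ha, erase_insert ha, Pi.single_eq_same, add_eq_left]
  refine sum_eq_zero fun x hx => Pi.single_eq_of_ne (fun hxr => ?_) 1
  have : a ∈ (insert a r).erase x := mem_erase.2 ⟨fun hax => ha (hax ▸ hx), mem_insert_self a r⟩
  exact ha (hxr ▸ this)

def extendByZero (K : Finset (Finset V)) (ω : K → ZMod 2) : Finset V → ZMod 2 :=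
  fun s => if h : s ∈ K then ω ⟨s, h⟩ else 0

theorem extendByZero_add (K : Finset (Finset V)) (ω ω' : K → ZMod 2) :
    extendByZero K (ω + ω') = extendByZero K ω + extendByZero K ω' := by
  funext s
  by_cases h : s ∈ K <;> simp [extendByZero, h]

theorem extendByZero_single (K : Finset (Finset V)) (r : K) :
    extendByZero K (Pi.single r 1) = Pi.single (r : Finset V) 1 := by
  funext s
  by_cases h : s ∈ K
  · simp [extendByZero, h, Pi.single_apply, Subtype.ext_iff]
  · simp [extendByZero, h, Pi.single_apply]
    rintro rfl
    exact h r.2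

theorem card_filter_extendByZero_ne (K : Finset (Finset V)) (ω : K → ZMod 2)
    (h : Finset V → ZMod 2) :
    #{s ∈ K | extendByZero K ω s ≠ h s} = hammingDist ω fun r => h r := by
  rw [hammingDist, ← card_map (Function.Embedding.subtype _)]
  congr 1
  ext s
  simp only [mem_filter, mem_map, mem_univ, true_and, Function.Embedding.coe_subtype]
  constructor
  · rintro ⟨hs, hne⟩
    exact ⟨⟨s, hs⟩, by simpa [extendByZero, hs] using hne, rfl⟩
  · rintro ⟨r, hne, rfl⟩
    exact ⟨r.2, by simpa [extendByZero, r.2] using hne⟩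

def coboundaryOfExtension (K : Finset (Finset V)) : (K → ZMod 2) →+ Finset V → ZMod 2 :=
  AddMonoidHom.mk' (fun ω => deltaF2 (extendByZero K ω)) fun ω ω' => by
    rw [extendByZero_add, deltaF2_add]

theorem deltaF2_extendByZero_restrict (hk : 1 ≤ k) (hdown : ∀ s ∈ faces, ∀ t, t ⊆ s → t ∈ faces)
    (g : Finset V → ZMod 2) {s : Finset V} (hs : s ∈ uFaces faces k) :
    deltaF2 (extendByZero (uFaces faces (k - 1)) fun r => g r) s = deltaF2 g s := by
  obtain ⟨hsf, hcard⟩ := mem_filter.1 hs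
  refine sum_congr rfl fun x hx => ?_
  have hx' : s.erase x ∈ uFaces faces (k - 1) :=
    mem_filter.2 ⟨hdown s hsf _ (erase_subset x s), by rw [card_erase_of_mem hx]; omega⟩
  simp [extendByZero, hx']

theorem exists_coboundaryOfExtension_ne (hdown : ∀ s ∈ faces, ∀ t, t ⊆ s → t ∈ faces)
    {s t : Finset V} (hs : s ∈ uFaces faces (k + 1)) (ht : t ∈ uFaces faces (k + 1))
    (hst : s ≠ t) :
    ∃ e, coboundaryOfExtension (uFaces faces k) e s ≠ coboundaryOfExtension _ e t := by
  obtain ⟨hsf, hs⟩ := mem_filter.1 hs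
  obtain ⟨-, ht⟩ := mem_filter.1 ht
  obtain ⟨v, hvs, hvt⟩ := not_subset.1 fun hsub => hst (eq_of_subset_of_card_le hsub (by omega))
  obtain ⟨x, hxs, hxv⟩ := exists_mem_ne (by omega : 1 < #s) v
  have hr : s.erase x ∈ uFaces faces k :=
    mem_filter.2 ⟨hdown s hsf _ (erase_subset x s), by rw [card_erase_of_mem hxs]; omega⟩
  refine ⟨Pi.single ⟨s.erase x, hr⟩ 1, ?_⟩
  simp only [coboundaryOfExtension, AddMonoidHom.mk'_apply, extendByZero_single]
  rw [deltaF2_single_of_subset (erase_subset x s) (card_erase_add_one hxs),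
    deltaF2_single_of_not_subset fun h => hvt (h (mem_erase.2 ⟨hxv.symm, hvs⟩))]
  exact one_ne_zero

noncomputable def nearCoboundaryCochains (faces : Finset (Finset V)) (k : ℕ) (ε : ℝ) :
    Finset (uFaces faces k → ZMod 2) :=
  {ω | ∃ u : uFaces faces (k - 1) → ZMod 2,
    hammingDist ω (fun r => coboundaryOfExtension _ u r) < (1 / 2 - ε) * #(uFaces faces k)}

noncomputable def denseCoboundaryCochains (faces : Finset (Finset V)) (k : ℕ) (ε : ℝ) :
    Finset (uFaces faces k → ZMod 2) :=
  {ω | (#(uFaces faces (k + 1)) : ℝ) / 2 + ε * #(uFaces faces (k + 1)) <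
    #{t ∈ uFaces faces (k + 1) | coboundaryOfExtension _ ω t ≠ 0}}

theorem card_nearCoboundaryCochains_le (hm : 0 < #(uFaces faces (k - 1)))
    {ε : ℝ} (hε : 0 ≤ ε) (hfar : 8 * #(uFaces faces (k - 1)) ≤ ε ^ 2 * #(uFaces faces k)) :
    (#(nearCoboundaryCochains faces k ε) : ℝ) ≤ 2 ^ #(uFaces faces k) / 2 := by
  have hunion := card_exists_hammingDist_lt_le
    (fun (u : uFaces faces (k - 1) → ZMod 2) (r : uFaces faces k) =>
      coboundaryOfExtension _ u r) hε
  simp only [Fintype.card_fun, ZMod.card, Fintype.card_coe, Nat.cast_pow,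
    Nat.cast_ofNat] at hunion
  refine hunion.trans ?_
  calc (2 : ℝ) ^ #(uFaces faces (k - 1)) * (2 ^ #(uFaces faces k) *
        exp (-2 * ε ^ 2 * #(uFaces faces k)))
      = 2 ^ #(uFaces faces k) * (2 ^ #(uFaces faces (k - 1)) *
        exp (-2 * ε ^ 2 * #(uFaces faces k))) := by ring
    _ ≤ 2 ^ #(uFaces faces k) * (1 / 2) := by gcongr; exact two_pow_mul_exp_le_half hm hfar
    _ = 2 ^ #(uFaces faces k) / 2 := by ring

theorem card_denseCoboundaryCochains_le (hdown : ∀ s ∈ faces, ∀ t, t ⊆ s → t ∈ faces)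
    {ε : ℝ} (hε : 0 < ε) (hsparse : 9 ≤ ε ^ 2 * #(uFaces faces (k + 1))) :
    (#(denseCoboundaryCochains faces k ε) : ℝ) ≤ 2 ^ #(uFaces faces k) / 36 := by
  set T := uFaces faces (k + 1)
  have hT : (0 : ℝ) < #T := by
    by_contra! h
    nlinarith
  have hcheb := card_half_add_lt_weight_mul_sq_le (coboundaryOfExtension (uFaces faces k)) T
    (fun s hs t ht hst => exists_coboundaryOfExtension_ne hdown hs ht hst)
    (by positivity : 0 < ε * #T)
  rw [Fintype.card_coe] at hcheb
  have h36 : 36 * (#T : ℝ) ≤ (2 * (ε * #T)) ^ 2 := by nlinarith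
  rw [le_div_iff₀ (by norm_num)]
  refine le_of_mul_le_mul_right ?_ hT
  calc (#(denseCoboundaryCochains faces k ε) : ℝ) * 36 * #T
      = #(denseCoboundaryCochains faces k ε) * (36 * #T) := by ring
    _ ≤ #(denseCoboundaryCochains faces k ε) * (2 * (ε * #T)) ^ 2 := by gcongr
    _ ≤ #T * 2 ^ #(uFaces faces k) := hcheb
    _ = 2 ^ #(uFaces faces k) * #T := by ring

theorem exists_cochain_far_from_coboundaries (hk : 1 ≤ k)
    (hdown : ∀ s ∈ faces, ∀ t, t ⊆ s → t ∈ faces) {ε : ℝ} (hε : 0 < ε)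
    (hm : 0 < #(uFaces faces (k - 1)))
    (hfar : 8 * #(uFaces faces (k - 1)) ≤ ε ^ 2 * #(uFaces faces k))
    (hsparse : 9 ≤ ε ^ 2 * #(uFaces faces (k + 1))) :
    ∃ f : Finset V → ZMod 2,
      (∀ g, (1 / 2 - ε) * #(uFaces faces k) ≤ #{s ∈ uFaces faces k | f s ≠ deltaF2 g s}) ∧
      #{s ∈ uFaces faces (k + 1) | deltaF2 f s ≠ 0} ≤ (1 / 2 + ε) * #(uFaces faces (k + 1)) := by
  have hclose := card_nearCoboundaryCochains_le hm hε.le hfar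
  have hdense := card_denseCoboundaryCochains_le hdown hε hsparse
  obtain ⟨ω, hω_near, hω_dense⟩ := exists_notMem_notMem_of_card_add_card_lt
    (s := nearCoboundaryCochains faces k ε) (t := denseCoboundaryCochains faces k ε) (by
      rw [Fintype.card_fun, ZMod.card, Fintype.card_coe]
      have h2 : (0 : ℝ) < 2 ^ #(uFaces faces k) := by positivity
      exact_mod_cast (by linarith : (#(nearCoboundaryCochains faces k ε) : ℝ) +
        #(denseCoboundaryCochains faces k ε) < 2 ^ #(uFaces faces k)))
  simp only [nearCoboundaryCochains, denseCoboundaryCochains, mem_filter, mem_univ, true_and,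
    not_exists, not_lt] at hω_near hω_dense
  refine ⟨extendByZero _ ω, fun g => ?_, hω_dense.trans_eq (by ring)⟩
  have hrestrict : (fun r : uFaces faces k => coboundaryOfExtension (uFaces faces (k - 1))
      (fun r => g r) (r : Finset V)) = fun r : uFaces faces k => deltaF2 g (r : Finset V) :=
    funext fun r => deltaF2_extendByZero_restrict hk hdown g r.2
  have hg := hω_near fun r => g r
  rwa [hrestrict, ← card_filter_extendByZero_ne] at hg

end RandomCochains

section UniformComplex

variable {V : Type*} {faces : Finset (Finset V)}

theorem uFaces_nonempty {d j : ℕ} (hempty : ∅ ∈ faces)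
    (hdown : ∀ s ∈ faces, ∀ t, t ⊆ s → t ∈ faces)
    (hpure : ∀ s ∈ faces, ∃ mx ∈ faces, s ⊆ mx ∧ mx.card = d + 1) (hj : j ≤ d) :
    (uFaces faces j).Nonempty := by
  obtain ⟨mx, hmx, -, hcard⟩ := hpure ∅ hempty
  obtain ⟨t, hts, htcard⟩ := exists_subset_card_eq (show j + 1 ≤ #mx by omega)
  exact ⟨t, mem_filter.2 ⟨hdown mx hmx t hts, htcard⟩⟩

theorem uProb_eq_div (m : ℕ) (A : Finset V → Prop) [DecidablePred A] :
    uProb faces m A = #{s ∈ uFaces faces m | A s} / #(uFaces faces m) := by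
  unfold uProb
  congr

theorem uProb_nonneg (m : ℕ) (A : Finset V → Prop) : 0 ≤ uProb faces m A := by
  unfold uProb
  positivity

end UniformComplex

theorem le_sq_mul_of_sqrt_div_le {a b ε : ℝ} (hb : 0 < b) (h : √(a / b) ≤ ε) : a ≤ ε ^ 2 * b :=
  (div_le_iff₀ hb).1 (Real.sqrt_le_iff.1 h).2

section DenseUpperBound

variable {V : Type w} [Fintype V] [DecidableEq V]

/-- In a pure `d`-dimensional complex with uniform distributions on all
levels, with `ε = max(√(8|X(k-1)|/|X(k)|), √(9/|X(k+1)|)) ≤ 1/2`, there is an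
`𝔽₂`-cochain `f ∈ C^k` at distance at least `1/2 - ε` from every coboundary whose
coboundary has weight at most `1/2 + ε`; consequently its expansion ratio is at most
`(1/2+ε)/(1/2-ε)`. -/
theorem stmt_18 (faces : Finset (Finset V)) (d k : ℕ) (hk : 1 ≤ k) (hd : k + 1 ≤ d)
    (hempty : ∅ ∈ faces)
    (hdown : ∀ s ∈ faces, ∀ t, t ⊆ s → t ∈ faces)
    (hpure : ∀ s ∈ faces, ∃ mx ∈ faces, s ⊆ mx ∧ mx.card = d + 1)
    (ε : ℝ)
    (hε : ε = max
      (Real.sqrt (8 * ((uFaces faces (k - 1)).card : ℝ) / ((uFaces faces k).card : ℝ)))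
      (Real.sqrt (9 / ((uFaces faces (k + 1)).card : ℝ))))
    (hεle : ε ≤ 1 / 2) :
    ∃ f : Finset V → ZMod 2,
      (∀ g : Finset V → ZMod 2, 1 / 2 - ε ≤ uProb faces k (fun s => f s ≠ deltaF2 g s)) ∧
      uProb faces (k + 1) (fun s => deltaF2 f s ≠ 0) ≤ 1 / 2 + ε ∧
      ∀ g : Finset V → ZMod 2,
        uProb faces (k + 1) (fun s => deltaF2 f s ≠ 0) ≤
          (1 / 2 + ε) / (1 / 2 - ε) * uProb faces k (fun s => f s ≠ deltaF2 g s) := by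
  have hlevel : ∀ j ≤ d, (0 : ℝ) < #(uFaces faces j) := fun j hj =>
    Nat.cast_pos.2 (card_pos.2 (uFaces_nonempty hempty hdown hpure hj))
  have hfar : 8 * #(uFaces faces (k - 1)) ≤ ε ^ 2 * #(uFaces faces k) :=
    le_sq_mul_of_sqrt_div_le (hlevel k (by omega)) (hε ▸ le_max_left _ _)
  have hsparse : 9 ≤ ε ^ 2 * #(uFaces faces (k + 1)) :=
    le_sq_mul_of_sqrt_div_le (hlevel (k + 1) hd) (hε ▸ le_max_right _ _)
  have hεpos : 0 < ε := by
    refine (hε ▸ (Real.sqrt_nonneg _).trans (le_max_right _ _) : 0 ≤ ε).lt_of_ne ?_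
    rintro rfl
    norm_num at hsparse
  rcases hεle.lt_or_eq with hlt | rfl
  · obtain ⟨f, hf_far, hf_sparse⟩ := exists_cochain_far_from_coboundaries hk hdown hεpos
      (Nat.cast_pos.1 (hlevel (k - 1) (by omega))) hfar hsparse
    have hdist : ∀ g, 1 / 2 - ε ≤ uProb faces k (fun s => f s ≠ deltaF2 g s) := fun g => by
      rw [uProb_eq_div, le_div_iff₀ (hlevel k (by omega))]
      exact hf_far g
    have hwt : uProb faces (k + 1) (fun s => deltaF2 f s ≠ 0) ≤ 1 / 2 + ε := by
      rw [uProb_eq_div, div_le_iff₀ (hlevel (k + 1) hd)]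
      exact hf_sparse
    refine ⟨f, hdist, hwt, fun g => ?_⟩
    calc uProb faces (k + 1) (fun s => deltaF2 f s ≠ 0)
        ≤ (1 / 2 + ε) / (1 / 2 - ε) * (1 / 2 - ε) := by
          rwa [div_mul_cancel₀ _ (by linarith)]
      _ ≤ _ := by gcongr; exact hdist g
  · -- here `(1/2 + ε) / (1/2 - ε) = 1 / 0 = 0`, so `δf` has to vanish
    have hzero : uProb faces (k + 1) (fun s => deltaF2 0 s ≠ 0) = 0 := by
      simp [uProb, deltaF2]
    refine ⟨0, fun g => ?_, ?_, fun g => ?_⟩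
    · simpa using uProb_nonneg k _
    · rw [hzero]; norm_num
    · rw [hzero]; norm_num

end DenseUpperBound
end
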